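/- arXiv:math/0610596 — 7 statements merged into one kernel-verified Lean document; each statement's English description precedes it below -/
import Mathlib

section
/- Define l_c^{(k)}(x) = (1/k!) · ∂^k/∂c^k [Γ(x)/Γ(x-c)]. Then for all k ≥ 1, (x-1)·(l_c^{(k)}(x) - l_c^{(k)}(x-1)) = c·l_c^{(k)}(x) + l_c^{(k-1)}(x) wherever defined. -/
/-! By the Gamma recurrence, `e_c(x) = Γ(x)/Γ(x-c)` satisfies `(x-1)(e_c(x) - e_c(x-1)) = c·e_c(x)`
identically in `c`. Taking `k`-th Taylor coefficients in `c` of both sides, Leibniz's rule turns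
the right-hand side into `c·l_c^{(k)}(x) + l_c^{(k-1)}(x)`. -/

open Complex

section TaylorCoefficients

variable {𝕜 : Type*} [NontriviallyNormedField 𝕜] {f : 𝕜 → 𝕜} {n : ℕ} {x : 𝕜}

theorem iteratedDeriv_succ_fun_id_mul (hf : ContDiffAt 𝕜 (n + 1) f x) :
    iteratedDeriv (n + 1) (fun z => z * f z) x =
      x * iteratedDeriv (n + 1) f x + (n + 1) * iteratedDeriv n f x := by
  rw [iteratedDeriv_fun_mul (f := fun z => z) contDiffAt_fun_id hf, Finset.sum_range_succ',
    Finset.sum_range_succ',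
    Finset.sum_eq_zero fun i _ => by simp [iteratedDeriv_fun_id]]
  simp only [zero_add, Nat.choose_one_right, Nat.cast_add, Nat.cast_one, iteratedDeriv_fun_id,
    one_ne_zero, ↓reduceIte, mul_one, add_tsub_cancel_right, Nat.choose_zero_right, one_mul,
    tsub_zero]
  ring

theorem one_div_factorial_mul_iteratedDeriv_succ_fun_id_mul [CharZero 𝕜]
    (hf : ContDiffAt 𝕜 (n + 1) f x) :
    1 / ((n + 1).factorial : 𝕜) * iteratedDeriv (n + 1) (fun z => z * f z) x =
      x * (1 / ((n + 1).factorial : 𝕜) * iteratedDeriv (n + 1) f x) +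
        1 / (n.factorial : 𝕜) * iteratedDeriv n f x := by
  rw [iteratedDeriv_succ_fun_id_mul hf, Nat.factorial_succ]
  have : (n.factorial : 𝕜) ≠ 0 := Nat.cast_ne_zero.mpr n.factorial_ne_zero
  push_cast
  field_simp

end TaylorCoefficients

namespace Complex

theorem contDiff_Gamma_div_Gamma_sub (z : ℂ) {n : WithTop ℕ∞} :
    ContDiff ℂ n fun c => Gamma z / Gamma (z - c) :=
  ((differentiable_one_div_Gamma.comp (differentiable_id.const_sub z)).const_mul
    (Gamma z)).contDiff

theorem sub_one_mul_Gamma_div_Gamma_sub_sub {x : ℂ} (hx : x - 1 ≠ 0) (c : ℂ) :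
    (x - 1) * (Gamma x / Gamma (x - c) - Gamma (x - 1) / Gamma (x - 1 - c)) =
      c * (Gamma x / Gamma (x - c)) := by
  have hΓx : Gamma x = (x - 1) * Gamma (x - 1) := by
    simpa using Gamma_add_one (x - 1) hx
  have hΓxc : (Gamma (x - 1 - c))⁻¹ = (x - 1 - c) * (Gamma (x - c))⁻¹ := by
    simpa [sub_right_comm] using one_div_Gamma_eq_self_mul_one_div_Gamma_add_one (x - 1 - c)
  simp only [div_eq_mul_inv, hΓxc, hΓx]
  ring

end Complex

theorem logarithm_equation_gamma_general (c : ℂ) (k : ℕ) (hk : 1 ≤ k) (x : ℂ)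
    (h1 : ∀ m : ℕ, x - 1 ≠ -(m : ℂ)) :
    letI l : ℕ → ℂ → ℂ := fun j z =>
      (1 / (j.factorial : ℂ)) *
        iteratedDeriv j (fun c' : ℂ => Complex.Gamma z / Complex.Gamma (z - c')) c
    (x - 1) * (l k x - l k (x - 1)) = c * l k x + l (k - 1) x := by
  obtain ⟨n, rfl⟩ := Nat.exists_eq_add_of_le' hk
  set G : ℂ → ℂ := fun c' => Gamma x / Gamma (x - c')
  set H : ℂ → ℂ := fun c' => Gamma (x - 1) / Gamma (x - 1 - c')
  have hrec : (fun c' => (x - 1) * (G c' - H c')) = fun c' => c' * G c' :=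
    funext (sub_one_mul_Gamma_div_Gamma_sub_sub (by simpa using h1 0))
  have hderiv := congrArg (fun g => 1 / ((n + 1).factorial : ℂ) * iteratedDeriv (n + 1) g c) hrec
  simp only [iteratedDeriv_const_mul_field] at hderiv
  rw [iteratedDeriv_fun_sub (contDiff_Gamma_div_Gamma_sub x).contDiffAt
      (contDiff_Gamma_div_Gamma_sub (x - 1)).contDiffAt,
    one_div_factorial_mul_iteratedDeriv_succ_fun_id_mul
      (contDiff_Gamma_div_Gamma_sub x).contDiffAt] at hderiv
  simp only [Nat.add_sub_cancel]
  linear_combination hderiv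

/-- The logarithms `l_c^{(k)}(x) = (1/k!) ∂^k/∂c^k (Γ(x)/Γ(x-c))` satisfy
`δ₋₁ l_c^{(k)} = c·l_c^{(k)} + l_c^{(k-1)}` for `k ≥ 1`, wherever defined. -/
theorem logarithm_equation_gamma (c : ℂ) (k : ℕ) (hk : 1 ≤ k) (x : ℂ)
    (h1 : ∀ m : ℕ, x - 1 ≠ -(m : ℂ))
    (h2 : ∀ m : ℕ, x - 1 - c ≠ -(m : ℂ)) :
    letI l : ℕ → ℂ → ℂ := fun j z =>
      (1 / (j.factorial : ℂ)) *
        iteratedDeriv j (fun c' : ℂ => Complex.Gamma z / Complex.Gamma (z - c')) c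
    (x - 1) * (l k x - l k (x - 1)) = c * l k x + l (k - 1) x :=
  logarithm_equation_gamma_general c k hk x h1
end

section
/- For fixed x ∈ ℂ \ ℝ₋ (the complex plane minus the closed negative real axis), the functions e_c^{(h)+}(x) := h^c · Γ(x/h)/Γ(x/h - c) converge to x^c as h → 0⁺, uniformly for c in any closed disk D(0,r) in ℂ. -/
/-!
Put `z = x / h`; then `h ^ c = x ^ c · z ^ (-c)`, so it suffices that
`Γ(z) / Γ(z - c) · z ^ (-c) - 1 = O(1 / ‖z‖)` uniformly for `‖c‖ ≤ R` as `z` runs along the ray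
through `x`. On that ray `‖z + t‖ ≥ m (‖z‖ + t)` for all `t ≥ 0`, with `m > 0` depending only on `x`.
By Euler's limit formula, `Γ(z) / Γ(z - c) = lim n ^ c ∏_{j ≤ n} (1 - c w_j)` with `w_j = 1 / (z + j)`.
Telescoping `log (z + j + 1) - log (z + j) = log (1 + w_j)`, the logarithm of
`n ^ c ∏ (1 - c w_j) · z ^ (-c)` is
`c (log n - log (z + n + 1)) + c ∑ (log (1 + w_j) - w_j) + ∑ (log (1 - c w_j) + c w_j)`.
The first term tends to `0`, and since `‖w_j‖ ≤ 1 / (m (‖z‖ + j))`, both sums are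
`O(R ^ 2 / (m ^ 2 ‖z‖))` uniformly in `n`.
-/

open Filter Topology Finset
open scoped Real

lemma sum_range_inv_add_sq_le {a : ℝ} (ha : 1 ≤ a) (n : ℕ) :
    ∑ j ∈ range n, ((a + j) ^ 2)⁻¹ ≤ 2 / a := by
  let f : ℕ → ℝ := fun j => (a - 1 / 2 + j)⁻¹
  have hterm : ∀ j : ℕ, ((a + j) ^ 2)⁻¹ ≤ f j - f (j + 1) := by
    intro j
    have hpos : 0 < a - 1 / 2 + j := by linarith [j.cast_nonneg (α := ℝ)]
    simp only [f, Nat.cast_succ]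
    rw [inv_sub_inv hpos.ne' (by linarith), show a - 1 / 2 + (j + 1) - (a - 1 / 2 + j) = 1 by ring,
      one_div]
    apply inv_anti₀ (mul_pos hpos (by linarith))
    nlinarith
  calc ∑ j ∈ range n, ((a + j) ^ 2)⁻¹ ≤ ∑ j ∈ range n, (f j - f (j + 1)) :=
        sum_le_sum fun j _ => hterm j
    _ = f 0 - f n := sum_range_sub' f n
    _ ≤ f 0 := by
      have : 0 < a - 1 / 2 + n := by linarith [n.cast_nonneg (α := ℝ)]
      linarith [inv_pos.2 this]
    _ ≤ 2 / a := by
      simp only [f, Nat.cast_zero, add_zero]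
      rw [inv_le_comm₀ (by linarith) (by positivity), inv_div]
      linarith

lemma tendstoUniformlyOn_of_dist_le {ι α β : Type*} [PseudoMetricSpace β] {F : ι → α → β}
    {f : α → β} {p : Filter ι} {s : Set α} {g : ι → ℝ} (hg : Tendsto g p (𝓝 0))
    (hF : ∀ᶠ i in p, ∀ a ∈ s, dist (f a) (F i a) ≤ g i) : TendstoUniformlyOn F f p s := by
  rw [Metric.tendstoUniformlyOn_iff]
  intro ε hε
  filter_upwards [hF, hg.eventually (gt_mem_nhds hε)] with i hi hgi a ha
  exact (hi a ha).trans_lt hgi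

namespace Complex

lemma add_ofReal_mem_slitPlane {z : ℂ} (hz : z ∈ slitPlane) {t : ℝ} (ht : 0 ≤ t) :
    z + t ∈ slitPlane := by
  rcases mem_slitPlane_iff.1 hz with h | h
  · exact mem_slitPlane_iff.2 (.inl (by simp; linarith))
  · exact mem_slitPlane_iff.2 (.inr (by simpa using h))

lemma log_add_one_sub_log {w : ℂ} (hw : w ∈ slitPlane) :
    log (w + 1) - log w = log (1 + w⁻¹) := by
  have hw1 : w + 1 ∈ slitPlane := by simpa using add_ofReal_mem_slitPlane hw zero_le_one
  -- `w` and `w + 1` have the same imaginary part, so their arguments have the same sign.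
  have him : -π < (log (w + 1) - log w).im ∧ (log (w + 1) - log w).im ≤ π := by
    simp only [sub_im, log_im]
    have := neg_pi_lt_arg (w + 1)
    have := neg_pi_lt_arg w
    have := arg_le_pi (w + 1)
    have harg : arg w < π := lt_of_le_of_ne (arg_le_pi w) (slitPlane_arg_ne_pi hw)
    rcases le_or_gt 0 w.im with h | h
    · have : 0 ≤ arg (w + 1) := arg_nonneg_iff.2 (by simpa using h)
      have : 0 ≤ arg w := arg_nonneg_iff.2 h
      constructor <;> linarith
    · have : arg (w + 1) < 0 := arg_neg_iff.2 (by simpa using h)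
      have : arg w < 0 := arg_neg_iff.2 h
      constructor <;> linarith
  rw [← log_exp him.1 him.2, exp_sub, exp_log (slitPlane_ne_zero hw1),
    exp_log (slitPlane_ne_zero hw), add_div, div_self (slitPlane_ne_zero hw), one_div]

lemma sum_range_log_one_add_inv {z : ℂ} (hz : z ∈ slitPlane) (n : ℕ) :
    ∑ j ∈ range n, log (1 + (z + j)⁻¹) = log (z + n) - log z := by
  have hstep : ∀ j ∈ range n, log (1 + (z + j)⁻¹) = log (z + ↑(j + 1)) - log (z + j) := by
    intro j _
    have hj : z + j ∈ slitPlane := by simpa using add_ofReal_mem_slitPlane hz j.cast_nonneg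
    rw [Nat.cast_succ, ← add_assoc, log_add_one_sub_log hj]
  rw [sum_congr rfl hstep, sum_range_sub (fun j : ℕ => log (z + j)), Nat.cast_zero, add_zero]

lemma norm_log_one_add_sub_self_le_sq {w : ℂ} (hw : ‖w‖ ≤ 1 / 2) :
    ‖log (1 + w) - w‖ ≤ ‖w‖ ^ 2 := by
  refine (norm_log_one_add_sub_self_le (hw.trans_lt (by norm_num))).trans ?_
  have : (1 - ‖w‖)⁻¹ ≤ 2 := by rw [inv_le_comm₀ (by linarith) two_pos]; linarith
  nlinarith [sq_nonneg ‖w‖]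

lemma norm_sum_range_log_one_add_sub_self_le {w : ℕ → ℂ} {a b : ℝ} (ha : 1 ≤ a)
    (hab : 2 * b ≤ a) (hw : ∀ j, ‖w j‖ ≤ b / (a + j)) (n : ℕ) :
    ‖∑ j ∈ range n, (log (1 + w j) - w j)‖ ≤ 2 * b ^ 2 / a := by
  have hb : 0 ≤ b := by
    have h0 := (norm_nonneg _).trans (hw 0)
    rw [Nat.cast_zero, add_zero] at h0
    exact (div_nonneg_iff.1 h0).elim (·.1) fun h => by linarith [h.2]
  have hterm : ∀ j : ℕ, ‖log (1 + w j) - w j‖ ≤ b ^ 2 * ((a + j) ^ 2)⁻¹ := by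
    intro j
    have haj : a ≤ a + j := le_add_of_nonneg_right j.cast_nonneg
    have hwj : ‖w j‖ ≤ 1 / 2 :=
      calc ‖w j‖ ≤ b / (a + j) := hw j
        _ ≤ b / a := div_le_div_of_nonneg_left hb (by linarith) haj
        _ ≤ 1 / 2 := by rw [div_le_div_iff₀ (by linarith) two_pos]; linarith
    calc ‖log (1 + w j) - w j‖ ≤ ‖w j‖ ^ 2 := norm_log_one_add_sub_self_le_sq hwj
      _ ≤ (b / (a + j)) ^ 2 := pow_le_pow_left₀ (norm_nonneg _) (hw j) 2
      _ = b ^ 2 * ((a + j) ^ 2)⁻¹ := by rw [div_pow, div_eq_mul_inv]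
  calc ‖∑ j ∈ range n, (log (1 + w j) - w j)‖
      ≤ ∑ j ∈ range n, b ^ 2 * ((a + j) ^ 2)⁻¹ := norm_sum_le_of_le _ fun j _ => hterm j
    _ = b ^ 2 * ∑ j ∈ range n, ((a + j) ^ 2)⁻¹ := (mul_sum ..).symm
    _ ≤ b ^ 2 * (2 / a) := by gcongr; exact sum_range_inv_add_sq_le ha n
    _ = 2 * b ^ 2 / a := by ring

lemma tendsto_log_natCast_sub_log_natCast_add (w : ℂ) :
    Tendsto (fun n : ℕ => log n - log (n + w)) atTop (𝓝 0) := by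
  have hsmall : Tendsto (fun n : ℕ => w / n) atTop (𝓝 0) := by
    simpa using tendsto_const_div_atTop_nhds_zero_nat w
  have hlog : Tendsto (fun n : ℕ => -log (1 + w / n)) atTop (𝓝 0) := by
    have := ((continuousAt_clog (by simp : (1 : ℂ) + 0 ∈ slitPlane)).tendsto.comp
      (tendsto_const_nhds.add hsmall)).neg
    simpa [Function.comp_def] using this
  refine hlog.congr' ?_
  filter_upwards [eventually_ne_atTop 0, hsmall.eventually_ne (by norm_num : (0 : ℂ) ≠ -1)]
    with n hn hw
  have hsplit : (n : ℂ) + w = ((n : ℝ) : ℂ) * (1 + w / n) := by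
    field_simp [Nat.cast_ne_zero.2 hn]
    push_cast
    ring
  have hne : 1 + w / n ≠ 0 := fun h => hw (by linear_combination h)
  rw [hsplit, log_ofReal_mul (Nat.cast_pos.2 (Nat.pos_of_ne_zero hn)) hne, natCast_log]
  ring

lemma GammaSeq_div_GammaSeq_sub {z : ℂ} (hz : ∀ j : ℕ, z + j ≠ 0) (c : ℂ) {n : ℕ}
    (hn : n ≠ 0) :
    GammaSeq z n / GammaSeq (z - c) n = (n : ℂ) ^ c * ∏ j ∈ range (n + 1), (1 - c / (z + j)) := by
  have hn' : (n : ℂ) ≠ 0 := Nat.cast_ne_zero.2 hn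
  have hfac : (n.factorial : ℂ) ≠ 0 := Nat.cast_ne_zero.2 n.factorial_ne_zero
  have hprod : ∏ j ∈ range (n + 1), (1 - c / (z + j))
      = (∏ j ∈ range (n + 1), (z - c + j)) / ∏ j ∈ range (n + 1), (z + j) := by
    rw [← prod_div_distrib]
    refine prod_congr rfl fun j _ => ?_
    field_simp [hz j]
    ring
  have hpow : (n : ℂ) ^ z = n ^ (z - c) * n ^ c := by rw [← cpow_add _ _ hn', sub_add_cancel]
  have hpow' : (n : ℂ) ^ (z - c) ≠ 0 := fun h => hn' ((cpow_eq_zero_iff _ _).1 h).1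
  rw [GammaSeq, GammaSeq, hprod, hpow]
  field_simp

lemma GammaSeq_div_GammaSeq_sub_mul_cpow_neg {z c : ℂ} (hz : z ∈ slitPlane)
    (hc : ∀ j : ℕ, c ≠ z + j) {n : ℕ} (hn : n ≠ 0) :
    GammaSeq z n / GammaSeq (z - c) n * z ^ (-c) =
      exp (c * (log n - log (n + (z + 1)))
        + (c * ∑ j ∈ range (n + 1), (log (1 + (z + j)⁻¹) - (z + j)⁻¹)
          + ∑ j ∈ range (n + 1), (log (1 + -(c / (z + j))) - -(c / (z + j))))) := by
  have hzj : ∀ j : ℕ, z + j ≠ 0 := fun j =>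
    slitPlane_ne_zero (by simpa using add_ofReal_mem_slitPlane hz j.cast_nonneg)
  have hfactor : ∀ j : ℕ, 1 - c / (z + j) ≠ 0 := fun j h =>
    hc j ((div_eq_one_iff_eq (hzj j)).1 (by linear_combination -h))
  have hprod : ∏ j ∈ range (n + 1), (1 - c / (z + j))
      = exp (∑ j ∈ range (n + 1), log (1 - c / (z + j))) := by
    rw [exp_sum]
    exact prod_congr rfl fun j _ => (exp_log (hfactor j)).symm
  rw [GammaSeq_div_GammaSeq_sub hzj c hn, cpow_def_of_ne_zero (Nat.cast_ne_zero.2 hn),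
    cpow_def_of_ne_zero (slitPlane_ne_zero hz), hprod, ← exp_add, ← exp_add]
  congr 1
  simp only [sum_sub_distrib, sum_range_log_one_add_inv hz, mul_sub, mul_sum, sum_neg_distrib,
    ← sub_eq_add_neg, div_eq_mul_inv]
  rw [show (n : ℂ) + (z + 1) = z + (n + 1) by ring]
  push_cast
  ring

lemma norm_sub_one_le_of_tendsto_exp {u D S : ℕ → ℂ} {L : ℂ} {B : ℝ}
    (hu : Tendsto u atTop (𝓝 L)) (hexp : ∀ᶠ n in atTop, u n = exp (D n + S n))
    (hD : Tendsto D atTop (𝓝 0)) (hS : ∀ n, ‖S n‖ ≤ B) (hB : 0 < B) (hB1 : 2 * B ≤ 1) :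
    ‖L - 1‖ ≤ 4 * B := by
  refine le_of_tendsto (hu.sub_const 1).norm ?_
  filter_upwards [hexp, hD.norm.eventually (ge_mem_nhds (by simpa using hB))] with n hn hDn
  have hsum : ‖D n + S n‖ ≤ 2 * B := by linarith [norm_add_le (D n) (S n), hS n]
  rw [hn]
  linarith [norm_exp_sub_one_le (hsum.trans hB1)]

lemma norm_cpow_le_exp (x c : ℂ) : ‖x ^ c‖ ≤ Real.exp (‖log x‖ * ‖c‖) := by
  rcases eq_or_ne x 0 with rfl | hx
  · rcases eq_or_ne c 0 with rfl | hc <;> simp [*]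
  rw [cpow_def_of_ne_zero hx, norm_exp, ← norm_mul]
  exact Real.exp_le_exp.2 (re_le_norm _)

lemma ofReal_cpow_eq_cpow_mul_div_ofReal_cpow_neg {x : ℂ} (hx : x ≠ 0) {h : ℝ} (hh : 0 < h)
    (c : ℂ) : (h : ℂ) ^ c = x ^ c * (x / h) ^ (-c) := by
  have hlog : log (x / h) = log x - Real.log h := by
    rw [div_eq_inv_mul, ← ofReal_inv, log_ofReal_mul (inv_pos.2 hh) hx, Real.log_inv]
    push_cast
    ring
  rw [cpow_def_of_ne_zero (ofReal_ne_zero.2 hh.ne'), cpow_def_of_ne_zero hx,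
    cpow_def_of_ne_zero (div_ne_zero hx (ofReal_ne_zero.2 hh.ne')), ← exp_add, hlog,
    ofReal_log hh.le]
  ring_nf

end Complex

open Complex

/-- For `0 < m ≤ 1` the nonzero `z` with this property form a sector `|arg z| ≤ θ` with `θ < π`. -/
def RayLowerBound (m : ℝ) (z : ℂ) : Prop :=
  ∀ t : ℝ, 0 ≤ t → m * (‖z‖ + t) ≤ ‖z + t‖

lemma exists_rayLowerBound_of_mem_slitPlane {x : ℂ} (hx : x ∈ slitPlane) :
    ∃ m > 0, RayLowerBound m x := by
  have hx0 : 0 < ‖x‖ := norm_pos_iff.2 (slitPlane_ne_zero hx)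
  rcases le_or_gt 0 x.re with hre | hre
  · refine ⟨1 / 2, one_half_pos, fun t ht => ?_⟩
    have hsq : ‖x + t‖ ^ 2 = ‖x‖ ^ 2 + 2 * x.re * t + t ^ 2 := by
      simp only [← normSq_eq_norm_sq, normSq_apply, add_re, add_im, ofReal_re, ofReal_im]
      ring
    rw [← pow_le_pow_iff_left₀ (by positivity) (norm_nonneg _) two_ne_zero, hsq]
    nlinarith [sq_nonneg (‖x‖ - t), mul_nonneg hre ht]
  · -- here `x.im ≠ 0`, which bounds `‖x + t‖` below for small `t`
    have him : 0 < |x.im| := abs_pos.2 ((mem_slitPlane_iff.1 hx).resolve_left hre.not_gt)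
    have him_le : |x.im| ≤ ‖x‖ := abs_im_le_norm x
    refine ⟨|x.im| / (3 * ‖x‖), by positivity, fun t ht => ?_⟩
    rcases le_or_gt t (2 * ‖x‖) with hsmall | hlarge
    · calc |x.im| / (3 * ‖x‖) * (‖x‖ + t) ≤ |x.im| / (3 * ‖x‖) * (3 * ‖x‖) := by
            gcongr; linarith
        _ = |(x + t).im| := by field_simp; simp
        _ ≤ ‖x + t‖ := abs_im_le_norm _
    · have htri : t ≤ ‖x + t‖ + ‖x‖ := by
        simpa [abs_of_nonneg ht] using norm_sub_le (x + t) x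
      calc |x.im| / (3 * ‖x‖) * (‖x‖ + t) ≤ 1 / 3 * (‖x‖ + t) := by
            gcongr ?_ * _; rw [div_le_div_iff₀ (by positivity) three_pos]; linarith
        _ ≤ ‖x + t‖ := by linarith

namespace RayLowerBound

variable {m : ℝ} {z : ℂ}

lemma le_one (hz : RayLowerBound m z) : m ≤ 1 := by
  have h := (hz 1 zero_le_one).trans (norm_add_le z 1)
  rw [norm_one] at h
  exact (mul_le_iff_le_one_left (by positivity)).1 h

lemma mem_slitPlane (hm : 0 < m) (hz : RayLowerBound m z) (hz0 : z ≠ 0) : z ∈ slitPlane := by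
  rw [mem_slitPlane_iff]
  by_contra! h
  have hzero : z + ((-z.re : ℝ) : ℂ) = 0 := Complex.ext (by simp) (by simp [h.2])
  have := hz (-z.re) (by linarith [h.1])
  rw [hzero, norm_zero] at this
  nlinarith [norm_pos_iff.2 hz0]

lemma div_ofReal (hz : RayLowerBound m z) {h : ℝ} (hh : 0 < h) : RayLowerBound m (z / h) := by
  intro t ht
  have hscale : z / h + t = (z + ((t * h : ℝ) : ℂ)) / h := by
    field_simp [ofReal_ne_zero.2 hh.ne']
    push_cast
    ring
  rw [hscale, norm_div, norm_div, norm_real, Real.norm_of_nonneg hh.le, le_div_iff₀ hh]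
  calc m * (‖z‖ / h + t) * h = m * (‖z‖ + t * h) := by field_simp
    _ ≤ _ := hz (t * h) (by positivity)

lemma norm_inv_add_natCast_le (hm : 0 < m) (hz : RayLowerBound m z) (hz0 : z ≠ 0) (j : ℕ) :
    ‖(z + j)⁻¹‖ ≤ m⁻¹ / (‖z‖ + j) := by
  have hpos : 0 < m * (‖z‖ + j) := by have := norm_pos_iff.2 hz0; positivity
  have := hz j j.cast_nonneg
  rw [ofReal_natCast] at this
  rw [norm_inv, div_eq_mul_inv, ← mul_inv]
  exact inv_anti₀ hpos this

theorem norm_Gamma_div_Gamma_sub_mul_cpow_neg_sub_one_le (hm : 0 < m) (hz : RayLowerBound m z)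
    {R : ℝ} (hR : 1 ≤ R) (hzR : 8 * R ^ 2 ≤ m ^ 2 * ‖z‖) {c : ℂ} (hc : ‖c‖ ≤ R) :
    ‖Gamma z / Gamma (z - c) * z ^ (-c) - 1‖ ≤ 16 * R ^ 2 / (m ^ 2 * ‖z‖) := by
  set ρ := ‖z‖
  have hm1 := hz.le_one
  have hRm : 1 ≤ R / m := by rw [le_div_iff₀ hm]; linarith
  have hρR : 8 * (R / m) ^ 2 ≤ ρ := by
    rw [div_pow, ← mul_div_assoc, div_le_iff₀ (by positivity)]; linarith
  have hρ1 : 1 ≤ ρ := by nlinarith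
  have hρRm : 2 * (R / m) ≤ ρ := by nlinarith
  have hρm : 2 * m⁻¹ ≤ ρ := le_trans (by rw [inv_eq_one_div]; gcongr) hρRm
  have hz0 : z ≠ 0 := norm_pos_iff.1 (by linarith)
  have hinv := hz.norm_inv_add_natCast_le hm hz0
  have hcj : ∀ j : ℕ, ‖-(c / (z + j))‖ ≤ R / m / (ρ + j) := fun j => by
    rw [norm_neg, div_eq_mul_inv, norm_mul]
    calc ‖c‖ * ‖(z + j)⁻¹‖ ≤ R * (m⁻¹ / (ρ + j)) :=
          mul_le_mul hc (hinv j) (norm_nonneg _) (by linarith)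
      _ = R / m / (ρ + j) := by ring
  have hc_ne : ∀ j : ℕ, c ≠ z + j := fun j hj => by
    have := hz j j.cast_nonneg
    rw [ofReal_natCast, ← hj] at this
    nlinarith [j.cast_nonneg (α := ℝ)]
  have hGamma : Gamma (z - c) ≠ 0 := Gamma_ne_zero fun j hj => hc_ne j (by linear_combination -hj)
  have hsums : ∀ n : ℕ, ‖c * ∑ j ∈ range (n + 1), (log (1 + (z + j)⁻¹) - (z + j)⁻¹)
      + ∑ j ∈ range (n + 1), (log (1 + -(c / (z + j))) - -(c / (z + j)))‖
      ≤ 4 * R ^ 2 / (m ^ 2 * ρ) := fun n => by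
    refine (norm_add_le_of_le (norm_mul_le_of_le hc
      (norm_sum_range_log_one_add_sub_self_le hρ1 hρm hinv (n + 1)))
      (norm_sum_range_log_one_add_sub_self_le hρ1 hρRm hcj (n + 1))).trans ?_
    rw [show R * (2 * m⁻¹ ^ 2 / ρ) + 2 * (R / m) ^ 2 / ρ = (2 * R + 2 * R ^ 2) / (m ^ 2 * ρ) by
      field_simp]
    gcongr
    nlinarith
  have hlim := ((GammaSeq_tendsto_Gamma z).div (GammaSeq_tendsto_Gamma (z - c)) hGamma).mul_const
    (z ^ (-c))
  have hbound := norm_sub_one_le_of_tendsto_exp hlim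
    ((eventually_ne_atTop 0).mono fun n hn => GammaSeq_div_GammaSeq_sub_mul_cpow_neg
      (hz.mem_slitPlane hm hz0) hc_ne hn)
    (by simpa using (tendsto_log_natCast_sub_log_natCast_add (z + 1)).const_mul c) hsums
    (by positivity) (by rw [← mul_div_assoc, div_le_one (by positivity)]; linarith)
  exact hbound.trans_eq (by ring)

lemma dist_cpow_ofReal_cpow_mul_Gamma_div_Gamma_le (hm : 0 < m) (hz : RayLowerBound m z)
    (hz0 : z ≠ 0) {R h : ℝ} (hR : 1 ≤ R) (hh : 0 < h) (hhR : 8 * R ^ 2 * h ≤ m ^ 2 * ‖z‖) {c : ℂ}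
    (hc : ‖c‖ ≤ R) :
    dist (z ^ c) ((h : ℂ) ^ c * Gamma (z / h) / Gamma (z / h - c))
      ≤ 16 * Real.exp (‖log z‖ * R) * R ^ 2 / (m ^ 2 * ‖z‖) * h := by
  have hnorm : ‖z / h‖ = ‖z‖ / h := by rw [norm_div, norm_real, Real.norm_of_nonneg hh.le]
  have hzR : 8 * R ^ 2 ≤ m ^ 2 * ‖z / h‖ := by
    rw [hnorm, mul_div_assoc', le_div_iff₀ hh]
    exact hhR
  rw [dist_eq_norm, ofReal_cpow_eq_cpow_mul_div_ofReal_cpow_neg hz0 hh]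
  calc ‖z ^ c - z ^ c * (z / h) ^ (-c) * Gamma (z / h) / Gamma (z / h - c)‖
      = ‖z ^ c‖ * ‖Gamma (z / h) / Gamma (z / h - c) * (z / h) ^ (-c) - 1‖ := by
        rw [← norm_mul, ← norm_neg]
        ring_nf
    _ ≤ Real.exp (‖log z‖ * R) * (16 * R ^ 2 / (m ^ 2 * ‖z / h‖)) := by
        gcongr
        · exact (norm_cpow_le_exp z c).trans (Real.exp_le_exp.2 (by gcongr))
        · exact (hz.div_ofReal hh).norm_Gamma_div_Gamma_sub_mul_cpow_neg_sub_one_le hm hR hzR hc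
    _ = 16 * Real.exp (‖log z‖ * R) * R ^ 2 / (m ^ 2 * ‖z‖) * h := by
        rw [hnorm]
        field_simp

end RayLowerBound

/-- For `x` off the closed negative real axis, the characters
`e_c^{(h)+}(x) = h^c Γ(x/h)/Γ(x/h - c)` converge to `x^c` as `h → 0⁺`,
uniformly for `c` in any closed disk `D(0,r)`. -/
theorem character_confluence_plus (x : ℂ) (hx : x ∈ Complex.slitPlane) (r : ℝ) :
    TendstoUniformlyOn
      (fun (h : ℝ) (c : ℂ) =>
        (h : ℂ) ^ c * Complex.Gamma (x / h) / Complex.Gamma (x / h - c))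
      (fun c : ℂ => x ^ c)
      (nhdsWithin (0 : ℝ) (Set.Ioi 0))
      (Metric.closedBall (0 : ℂ) r) := by
  obtain ⟨m, hm, hxm⟩ := exists_rayLowerBound_of_mem_slitPlane hx
  have hx0 : 0 < ‖x‖ := norm_pos_iff.2 (slitPlane_ne_zero hx)
  have hR : 1 ≤ max r 1 := le_max_right r 1
  refine tendstoUniformlyOn_of_dist_le
    (g := fun h => 16 * Real.exp (‖log x‖ * max r 1) * max r 1 ^ 2 / (m ^ 2 * ‖x‖) * h)
    (by simpa using ((tendsto_id (x := 𝓝[>] (0 : ℝ))).mono_right nhdsWithin_le_nhds).const_mul _) ?_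
  filter_upwards [Ioo_mem_nhdsGT (by positivity : 0 < m ^ 2 * ‖x‖ / (8 * max r 1 ^ 2))]
    with h hh c hc
  refine hxm.dist_cpow_ofReal_cpow_mul_Gamma_div_Gamma_le hm (slitPlane_ne_zero hx) hR hh.1 ?_
    ((mem_closedBall_zero_iff.1 hc).trans (le_max_left r 1))
  rw [← le_div_iff₀' (by positivity)]
  exact hh.2.le
end

section
/- For every h > 0 and every n ≥ 0, all coefficients ψ_{n,s}^{(h)} in the factorial-series expansion 1/x^n = Σ_{s≥n} ψ_{n,s}^{(h)} · x^{-[s]_h} (valid for Re(x) large) are nonnegative real numbers. -/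
/-!
Summing the telescoping identity
`1 / (x · x^{[s]_h}) = ∑_{j ≥ 0} h^j s(s+1)⋯(s+j-1) / x^{[s+j+1]_h}` (valid for `x ≥ h`) over the
terms of an expansion of `1 / xⁿ` yields an expansion of `1 / x^{n+1}`, with coefficients that are
again nonnegative. Factorial series expansions are unique: if `∑ d_t / x^{[t]_h}` vanishes for all
large real `x`, dominated convergence as `x → ∞` gives `d_0 = 0`, and
`x^{[t+1]_h} = x · (x + h)^{[t]_h}` reduces the tail to a series of the same kind.
-/

open Finset Filter Topology

namespace FactorialSeries

-- `x^{[t]_h}`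
def stepAscFactorial (h x : ℝ) (t : ℕ) : ℝ := ∏ k ∈ range t, (x + k * h)

section stepAscFactorial

variable {h x y : ℝ}

@[simp]
lemma stepAscFactorial_zero (h x : ℝ) : stepAscFactorial h x 0 = 1 := rfl

lemma stepAscFactorial_succ (h x : ℝ) (t : ℕ) :
    stepAscFactorial h x (t + 1) = stepAscFactorial h x t * (x + t * h) :=
  prod_range_succ _ _

lemma stepAscFactorial_succ' (h x : ℝ) (t : ℕ) :
    stepAscFactorial h x (t + 1) = x * stepAscFactorial h (x + h) t := by
  simp only [stepAscFactorial, prod_range_succ', Nat.cast_succ, Nat.cast_zero, zero_mul, add_zero]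
  rw [mul_comm]
  exact congrArg (x * ·) (prod_congr rfl fun k _ => by ring)

lemma stepAscFactorial_mul_eq_mul_stepAscFactorial_add (h x : ℝ) (t : ℕ) :
    stepAscFactorial h x t * ((x + t * h) * (x + (t + 1) * h)) =
      x * (x + h) * stepAscFactorial h (x + 2 * h) t := by
  have key := (stepAscFactorial_succ h x (t + 1)).symm.trans (stepAscFactorial_succ' h x (t + 1))
  rw [stepAscFactorial_succ, stepAscFactorial_succ', add_assoc, ← two_mul] at key
  push_cast at key
  linear_combination key

lemma stepAscFactorial_pos (hh : 0 ≤ h) (hx : 0 < x) (t : ℕ) : 0 < stepAscFactorial h x t :=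
  prod_pos fun _ _ => by positivity

lemma stepAscFactorial_le_stepAscFactorial (hh : 0 ≤ h) (hx : 0 ≤ x) (hxy : x ≤ y) (t : ℕ) :
    stepAscFactorial h x t ≤ stepAscFactorial h y t :=
  prod_le_prod (fun _ _ => by positivity) fun _ _ => by linarith

lemma pow_le_stepAscFactorial (hh : 0 ≤ h) (hx : 0 ≤ x) (t : ℕ) :
    x ^ t ≤ stepAscFactorial h x t := by
  simpa [stepAscFactorial] using prod_le_prod (s := range t) (f := fun _ => x) (fun _ _ => hx)
    fun k _ => le_add_of_nonneg_right (by positivity)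

lemma tendsto_inv_stepAscFactorial_succ (hh : 0 ≤ h) (t : ℕ) :
    Tendsto (fun x => (stepAscFactorial h x (t + 1))⁻¹) atTop (𝓝 0) := by
  refine Tendsto.inv_tendsto_atTop (tendsto_atTop_mono' _ ?_ (tendsto_pow_atTop t.succ_ne_zero))
  filter_upwards [eventually_ge_atTop 0] with x hx
  exact pow_le_stepAscFactorial hh hx _

end stepAscFactorial

section shift

variable {h x : ℝ}

-- the error after `m` terms of the expansion of `1 / (x · x^{[s]_h})`
noncomputable def shiftRemainder (h x : ℝ) (s m : ℕ) : ℝ :=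
  h ^ m * s.ascFactorial m / (x * stepAscFactorial h x (s + m))

lemma shiftRemainder_succ (h x : ℝ) (s m : ℕ) :
    shiftRemainder h x s (m + 1) =
      h ^ m * s.ascFactorial m * ((s + m) * h) /
        (x * stepAscFactorial h x (s + m) * (x + (s + m) * h)) := by
  rw [shiftRemainder, Nat.ascFactorial_succ, ← add_assoc, stepAscFactorial_succ]
  push_cast
  ring

lemma shiftRemainder_sub_succ (hh : 0 ≤ h) (hx : 0 < x) (s m : ℕ) :
    shiftRemainder h x s m - shiftRemainder h x s (m + 1) =
      h ^ m * s.ascFactorial m / stepAscFactorial h x (s + m + 1) := by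
  have hP := stepAscFactorial_pos hh hx (s + m)
  have hu : 0 < x + (s + m) * h := by positivity
  rw [shiftRemainder_succ, shiftRemainder, stepAscFactorial_succ]
  push_cast
  field_simp
  ring

lemma shiftRemainder_nonneg (hh : 0 ≤ h) (hx : 0 < x) (s m : ℕ) : 0 ≤ shiftRemainder h x s m := by
  have := stepAscFactorial_pos hh hx (s + m)
  unfold shiftRemainder
  positivity

-- the `m`-th remainder decays like `1 / m`
lemma mul_shiftRemainder_antitone (hh : 0 ≤ h) (hx : 0 < x) (hhx : h ≤ x) (s : ℕ) :
    Antitone fun m : ℕ => (s + m) * shiftRemainder h x s m := by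
  refine antitone_nat_of_succ_le fun m => ?_
  have hP := stepAscFactorial_pos hh hx (s + m)
  have hu : 0 < x + (s + m) * h := by positivity
  have key : ((s : ℝ) + ↑(m + 1)) * shiftRemainder h x s (m + 1) =
      (s + m) * shiftRemainder h x s m * ((s + m + 1) * h / (x + (s + m) * h)) := by
    rw [shiftRemainder_succ, shiftRemainder]
    push_cast
    field_simp
    ring
  rw [key]
  refine mul_le_of_le_one_right ?_ ((div_le_one hu).mpr (by linarith))
  have := shiftRemainder_nonneg hh hx s m
  positivity

lemma tendsto_shiftRemainder (hh : 0 ≤ h) (hx : 0 < x) (hhx : h ≤ x) (s : ℕ) :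
    Tendsto (shiftRemainder h x s) atTop (𝓝 0) := by
  refine squeeze_zero' (.of_forall (shiftRemainder_nonneg hh hx s)) ?_
    (tendsto_const_div_atTop_nhds_zero_nat (s * shiftRemainder h x s 0))
  filter_upwards [eventually_gt_atTop 0] with m hm
  have hanti := mul_shiftRemainder_antitone hh hx hhx s (Nat.zero_le m)
  have := shiftRemainder_nonneg hh hx s m
  rw [le_div_iff₀ (by positivity)]
  push_cast at hanti
  nlinarith

lemma hasSum_inv_mul_stepAscFactorial (hh : 0 ≤ h) (hx : 0 < x) (hhx : h ≤ x) (s : ℕ) :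
    HasSum (fun j => h ^ j * s.ascFactorial j / stepAscFactorial h x (s + j + 1))
      (x * stepAscFactorial h x s)⁻¹ := by
  rw [hasSum_iff_tendsto_nat_of_nonneg fun j => ?_]
  · simp_rw [← shiftRemainder_sub_succ hh hx, sum_range_sub']
    convert (tendsto_shiftRemainder hh hx hhx s).const_sub (shiftRemainder h x s 0) using 2
    simp [shiftRemainder]
  · have := stepAscFactorial_pos hh hx (s + j + 1)
    positivity

end shift

lemma hasSum_sum_antidiagonal_of_nonneg {F : ℕ × ℕ → ℝ} (hF : 0 ≤ F) {a : ℕ → ℝ} {A : ℝ}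
    (hrow : ∀ s, HasSum (fun j => F (s, j)) (a s)) (ha : HasSum a A) :
    HasSum (fun n => ∑ p ∈ antidiagonal n, F p) A := by
  have hsum : Summable F := (summable_prod_of_nonneg hF).2
    ⟨fun s => (hrow s).summable, by simpa only [(hrow _).tsum_eq] using ha.summable⟩
  have hF : HasSum F A := ha.unique (hsum.hasSum.prod_fiberwise hrow) ▸ hsum.hasSum
  simpa only [Function.comp_apply, HasAntidiagonal.sigmaAntidiagonalEquivProd_apply,
    Finset.sum_coe_sort] using
    (HasAntidiagonal.sigmaAntidiagonalEquivProd.hasSum_iff.mpr hF).sigma fun n => hasSum_fintype _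

-- expanding each term `c_s / (x · x^{[s]_h})` of `1 / x^{n+1}` by
-- `hasSum_inv_mul_stepAscFactorial` contributes `c_s h^j s(s+1)⋯(s+j-1)` to index `s + j + 1`
noncomputable def invPowCoeff (h : ℝ) : ℕ → ℕ → ℝ
  | 0, t => if t = 0 then 1 else 0
  | _ + 1, 0 => 0
  | n + 1, t + 1 => ∑ p ∈ antidiagonal t, invPowCoeff h n p.1 * (h ^ p.2 * p.1.ascFactorial p.2)

lemma invPowCoeff_nonneg {h : ℝ} (hh : 0 ≤ h) : ∀ n t, 0 ≤ invPowCoeff h n t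
  | 0, t => by unfold invPowCoeff; positivity
  | _ + 1, 0 => le_rfl
  | n + 1, t + 1 => sum_nonneg fun p _ => by
      have := invPowCoeff_nonneg hh n p.1
      positivity

lemma hasSum_invPowCoeff {h x : ℝ} (hh : 0 < h) (hhx : h ≤ x) :
    ∀ n, HasSum (fun t => invPowCoeff h n t / stepAscFactorial h x t) (x ^ n)⁻¹
  | 0 => by
    convert hasSum_ite_eq 0 (1 : ℝ) using 2 with t
    · split_ifs with ht <;> simp [invPowCoeff, ht]
    · simp
  | n + 1 => by
    have hx : 0 < x := hh.trans_le hhx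
    set F : ℕ × ℕ → ℝ := fun p => invPowCoeff h n p.1 *
      (h ^ p.2 * p.1.ascFactorial p.2 / stepAscFactorial h x (p.1 + p.2 + 1))
    have hF : 0 ≤ F := fun p => by
      have := invPowCoeff_nonneg hh.le n p.1
      have := stepAscFactorial_pos hh.le hx (p.1 + p.2 + 1)
      positivity
    have hcol : HasSum (fun s => invPowCoeff h n s * (x * stepAscFactorial h x s)⁻¹)
        ((x ^ n)⁻¹ * x⁻¹) := by
      have e : (fun s => invPowCoeff h n s * (x * stepAscFactorial h x s)⁻¹) =
          fun s => invPowCoeff h n s / stepAscFactorial h x s * x⁻¹ :=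
        funext fun s => by rw [mul_inv]; ring
      exact e ▸ (hasSum_invPowCoeff hh hhx n).mul_right x⁻¹
    have hsum := hasSum_sum_antidiagonal_of_nonneg hF
      (fun s => (hasSum_inv_mul_stepAscFactorial hh.le hx hhx s).mul_left (invPowCoeff h n s)) hcol
    rw [← hasSum_nat_add_iff' 1, sum_range_one, invPowCoeff, zero_div, sub_zero, pow_succ, mul_inv]
    have e : (fun t => invPowCoeff h (n + 1) (t + 1) / stepAscFactorial h x (t + 1)) =
        fun t => ∑ p ∈ antidiagonal t, F p := funext fun t => by
      simp only [invPowCoeff, sum_div]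
      refine sum_congr rfl fun p hp => ?_
      simp only [F, mul_div_assoc, mem_antidiagonal.mp hp]
    exact e ▸ hsum

section uniqueness

variable {E : Type*} [NormedAddCommGroup E] [NormedSpace ℝ E] {h : ℝ}

-- comparing `x` with `x + 2 * h` gains a factor `O(1 / t ^ 2)` in the `t`-th term
lemma summable_div_stepAscFactorial_add_two_mul (hh : 0 < h) {x : ℝ} (hhx : h ≤ x) {a : ℕ → ℝ}
    (ha : 0 ≤ a) {C : ℝ} (hC : ∀ t, a t / stepAscFactorial h x t ≤ C) :
    Summable fun t => a t / stepAscFactorial h (x + 2 * h) t := by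
  have hx : 0 < x := hh.trans_le hhx
  have hC0 : 0 ≤ C := (ha 0).trans (by simpa using hC 0)
  have hsum : Summable fun t : ℕ => C * (x * (x + h)) / h ^ 2 * (1 / ((t : ℝ) + 1) ^ 2) := by
    refine Summable.mul_left _ ?_
    exact_mod_cast (summable_nat_add_iff 1).mpr (Real.summable_one_div_nat_pow.mpr one_lt_two)
  refine hsum.of_nonneg_of_le (fun t => ?_) fun t => ?_
  · exact div_nonneg (ha t) (stepAscFactorial_pos hh.le (by positivity) t).le
  have hP := stepAscFactorial_pos hh.le hx t
  have hP₂ := stepAscFactorial_pos hh.le (by positivity : 0 < x + 2 * h) t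
  have hu : h * (t + 1) ≤ x + t * h := by nlinarith
  have hv : h * (t + 1) ≤ x + (t + 1) * h := by nlinarith
  have e : a t / stepAscFactorial h (x + 2 * h) t =
      a t / stepAscFactorial h x t * (x * (x + h) / ((x + t * h) * (x + (t + 1) * h))) := by
    have key := stepAscFactorial_mul_eq_mul_stepAscFactorial_add h x t
    field_simp
    linear_combination a t * key
  rw [e]
  calc a t / stepAscFactorial h x t * (x * (x + h) / ((x + t * h) * (x + (t + 1) * h)))
      ≤ C * (x * (x + h) / ((h * (t + 1)) * (h * (t + 1)))) := by
        gcongr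
        · exact hC t
    _ = C * (x * (x + h)) / h ^ 2 * (1 / ((t : ℝ) + 1) ^ 2) := by
        field_simp

lemma norm_inv_stepAscFactorial_smul (hh : 0 ≤ h) {x : ℝ} (hx : 0 < x) (t : ℕ) (v : E) :
    ‖(stepAscFactorial h x t)⁻¹ • v‖ = ‖v‖ / stepAscFactorial h x t := by
  rw [norm_smul, norm_inv, Real.norm_of_nonneg (stepAscFactorial_pos hh hx t).le, inv_mul_eq_div]

-- by dominated convergence the series tends to its constant term as `x → ∞`
lemma coeff_zero_eq_zero_of_hasSum_zero [CompleteSpace E] (hh : 0 < h) {d : ℕ → E} {M : ℝ}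
    (hd : ∀ x, M < x → HasSum (fun t => (stepAscFactorial h x t)⁻¹ • d t) 0) : d 0 = 0 := by
  set x₀ := max M 0 + h
  have hhx₀ : h ≤ x₀ := le_add_of_nonneg_left (le_max_right M 0)
  have hMx₀ : M < x₀ := by linarith [le_max_left M 0]
  have hx₀ : 0 < x₀ := hh.trans_le hhx₀
  obtain ⟨C, hC⟩ : ∃ C, ∀ t, ‖d t‖ / stepAscFactorial h x₀ t ≤ C := by
    obtain ⟨C, hC⟩ := (hd x₀ hMx₀).summable.tendsto_atTop_zero.norm.bddAbove_range
    exact ⟨C, fun t => norm_inv_stepAscFactorial_smul hh.le hx₀ t (d t) ▸ hC ⟨t, rfl⟩⟩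
  have hlim : Tendsto (fun x => ∑' t, (stepAscFactorial h x t)⁻¹ • d t) atTop
      (𝓝 (∑' t, if t = 0 then d 0 else 0)) := by
    refine tendsto_tsum_of_dominated_convergence
      (summable_div_stepAscFactorial_add_two_mul hh hhx₀ (fun t => norm_nonneg (d t)) hC)
      (fun t => ?_) ?_
    · cases t with
      | zero => simp
      | succ t => simpa using (tendsto_inv_stepAscFactorial_succ hh.le t).smul_const (d (t + 1))
    · filter_upwards [eventually_ge_atTop (x₀ + 2 * h)] with x hx t
      have hx₁ : 0 < x₀ + 2 * h := by positivity
      rw [norm_inv_stepAscFactorial_smul hh.le (hx₁.trans_le hx)]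
      exact div_le_div_of_nonneg_left (norm_nonneg _) (stepAscFactorial_pos hh.le hx₁ t)
        (stepAscFactorial_le_stepAscFactorial hh.le hx₁.le hx t)
  rw [tsum_ite_eq] at hlim
  refine tendsto_nhds_unique hlim (tendsto_const_nhds.congr' ?_)
  filter_upwards [eventually_gt_atTop M] with x hx
  exact (hd x hx).tsum_eq.symm

lemma hasSum_inv_smul_succ {x : ℝ} (hx : x ≠ 0) {d : ℕ → E}
    (hd : HasSum (fun t => (stepAscFactorial h x t)⁻¹ • d t) 0) (hd₀ : d 0 = 0) :
    HasSum (fun t => (stepAscFactorial h (x + h) t)⁻¹ • d (t + 1)) 0 := by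
  rw [← hasSum_nat_add_iff' 1] at hd
  simp only [sum_range_one, hd₀, smul_zero, sub_zero, stepAscFactorial_succ', mul_inv,
    mul_smul] at hd
  simpa [smul_smul, hx] using hd.const_smul x

theorem coeff_eq_zero_of_hasSum_zero [CompleteSpace E] (hh : 0 < h) {d : ℕ → E} {M : ℝ}
    (hd : ∀ x, M < x → HasSum (fun t => (stepAscFactorial h x t)⁻¹ • d t) 0) (t : ℕ) :
    d t = 0 := by
  induction t generalizing d M with
  | zero => exact coeff_zero_eq_zero_of_hasSum_zero hh hd
  | succ t ih =>
    refine ih (d := fun t => d (t + 1)) (M := max M 0 + h) fun y hy => ?_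
    have hyM : M < y - h := by linarith [le_max_left M 0]
    have hy₀ : 0 < y - h := by linarith [le_max_right M 0]
    simpa using
      hasSum_inv_smul_succ hy₀.ne' (hd _ hyM) (coeff_zero_eq_zero_of_hasSum_zero hh hd)

end uniqueness

theorem eq_invPowCoeff_of_hasSum {h : ℝ} (hh : 0 < h) {n : ℕ} {ψ : ℕ → ℂ} {R : ℝ}
    (hψ : ∀ x : ℝ, R < x →
      HasSum (fun t => (stepAscFactorial h x t)⁻¹ • ψ t) ((x : ℂ) ^ n)⁻¹) (t : ℕ) :
    ψ t = invPowCoeff h n t := by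
  refine sub_eq_zero.mp <| coeff_eq_zero_of_hasSum_zero hh
    (d := fun t => ψ t - invPowCoeff h n t) (M := max R h) (fun x hx => ?_) t
  have hc : HasSum (fun t => (stepAscFactorial h x t)⁻¹ • (invPowCoeff h n t : ℂ))
      ((x : ℂ) ^ n)⁻¹ := by
    simpa [Complex.real_smul, div_eq_inv_mul] using
      Complex.hasSum_ofReal.mpr (hasSum_invPowCoeff hh ((le_max_right R h).trans hx.le) n)
  simpa [smul_sub] using (hψ x ((le_max_left R h).trans_lt hx)).sub hc

end FactorialSeries

/-- The coefficients of the `h`-factorial series expansion of `1/xⁿ` are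
nonnegative real numbers. -/
theorem factorial_series_coeffs_of_inv_pow_nonneg
    (h : ℝ) (hh : 0 < h) (n : ℕ) (ψ : ℕ → ℂ) (R : ℝ)
    (hexp : ∀ x : ℂ, R < x.re →
      HasSum (fun s : ℕ => ψ s * (∏ k ∈ Finset.range s, (x + (k : ℂ) * (h : ℂ)))⁻¹)
        ((x ^ n)⁻¹)) :
    ∀ s : ℕ, (ψ s).im = 0 ∧ 0 ≤ (ψ s).re := by
  intro s
  have hψ := FactorialSeries.eq_invPowCoeff_of_hasSum hh (R := R) (fun x hx => by
    simpa [FactorialSeries.stepAscFactorial, Complex.real_smul, mul_comm] using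
      hexp x (by simpa using hx)) s
  rw [hψ]
  exact ⟨Complex.ofReal_im _, by simpa using FactorialSeries.invPowCoeff_nonneg hh.le n s⟩
end

section
/- For h > 0 and 0 < α with Re(x) > α, one has the convergent factorial-series expansion 1/(x - α) = Σ_{s≥1} α^{[s-1]_h} · x^{-[s]_h}, where α^{[s-1]_h} = α(α+h)···(α+(s-2)h) (with α^{[0]_h} = 1). -/
/-!
With `P s = ∏_{k<s} (α + k h)` and `Q s = ∏_{k<s} (x + k h)`, the constant difference
`(x + s h) - (α + s h) = x - α` makes the `s`-th term equal to
`(P s / Q s - P (s+1) / Q (s+1)) / (x - α)`, so the partial sums telescope to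
`(1 - P N / Q N) / (x - α)`. In modulus `P N / Q N` is dominated by the real product
`∏_{k<N} (α + k h) / (Re x + k h) ≤ exp (-(Re x - α) ∑_{k<N} 1 / (Re x + k h))`, which tends to `0`
because the harmonic-type sum diverges; the same telescoping applied to the real majorant gives
absolute convergence.
-/

open Finset Filter Topology

theorem sum_range_prod_mul_inv_prod_succ_mul {K : Type*} [Field K] {u v : ℕ → K} {d : K}
    (hv : ∀ k, v k ≠ 0) (hd : ∀ k, v k - u k = d) (N : ℕ) :
    (∑ s ∈ range N, (∏ k ∈ range s, u k) * (∏ k ∈ range (s + 1), v k)⁻¹) * d =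
      1 - (∏ k ∈ range N, u k) / ∏ k ∈ range N, v k := by
  induction N with
  | zero => simp
  | succ N ih =>
    rw [sum_range_succ, add_mul, ih, prod_range_succ, prod_range_succ, ← hd N]
    field_simp [hv N]
    ring

theorem tendsto_sum_range_prod_mul_inv_prod_succ {K : Type*} [Field K] [TopologicalSpace K]
    [IsTopologicalRing K] {u v : ℕ → K} {d : K} (hv : ∀ k, v k ≠ 0) (hd : ∀ k, v k - u k = d)
    (hd₀ : d ≠ 0)
    (hlim : Tendsto (fun N => (∏ k ∈ range N, u k) / ∏ k ∈ range N, v k) atTop (𝓝 0)) :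
    Tendsto (fun N => ∑ s ∈ range N, (∏ k ∈ range s, u k) * (∏ k ∈ range (s + 1), v k)⁻¹)
      atTop (𝓝 d⁻¹) := by
  have hsum : ∀ N, ∑ s ∈ range N, (∏ k ∈ range s, u k) * (∏ k ∈ range (s + 1), v k)⁻¹ =
      (1 - (∏ k ∈ range N, u k) / ∏ k ∈ range N, v k) * d⁻¹ := fun N => by
    rw [← sum_range_prod_mul_inv_prod_succ_mul hv hd, mul_inv_cancel_right₀ hd₀]
  simpa only [hsum, sub_zero, one_mul] using
    ((tendsto_const_nhds (x := (1 : K))).sub hlim).mul_const d⁻¹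

theorem norm_prod_mul_inv_prod_le {K ι κ : Type*} [NormedField K] {u : ι → K} {v : κ → K}
    {a : ι → ℝ} {b : κ → ℝ} (s : Finset ι) (t : Finset κ) (hu : ∀ i, ‖u i‖ ≤ a i)
    (hb : ∀ j, 0 < b j) (hv : ∀ j, b j ≤ ‖v j‖) :
    ‖(∏ i ∈ s, u i) * (∏ j ∈ t, v j)⁻¹‖ ≤ (∏ i ∈ s, a i) * (∏ j ∈ t, b j)⁻¹ := by
  rw [norm_mul, norm_inv, norm_prod, norm_prod]
  gcongr with i _ j _
  · exact prod_nonneg fun i _ => (norm_nonneg _).trans (hu i)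
  · exact hu i
  · exact prod_pos fun j _ => hb j
  · exact fun j _ => (hb j).le
  · exact hv j

theorem tendsto_sum_range_inv_add_mul_atTop {β h : ℝ} (hβ : 0 < β) (hh : 0 ≤ h) :
    Tendsto (fun N => ∑ k ∈ range N, (β + k * h)⁻¹) atTop atTop := by
  set M := max β h
  have hM : 0 < M := hβ.trans_le (le_max_left _ _)
  refine tendsto_atTop_mono (fun N => ?_)
    (Real.tendsto_sum_range_one_div_nat_succ_atTop.const_mul_atTop (inv_pos.2 hM))
  rw [mul_sum]
  refine sum_le_sum fun k _ => ?_
  rw [← one_div, one_div_mul_one_div, one_div]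
  gcongr
  nlinarith [le_max_left β h, le_max_right β h, (k.cast_nonneg : (0 : ℝ) ≤ k)]

theorem tendsto_prod_add_mul_div_prod_add_mul {α β h : ℝ} (hα : 0 ≤ α) (hαβ : α < β)
    (hh : 0 ≤ h) :
    Tendsto (fun N => (∏ k ∈ range N, (α + k * h)) / ∏ k ∈ range N, (β + k * h)) atTop (𝓝 0) := by
  have hnum : ∀ k : ℕ, 0 ≤ α + k * h := fun k => add_nonneg hα (by positivity)
  have hpos : ∀ k : ℕ, 0 < β + k * h := fun k => (hnum k).trans_lt (by linarith)
  have hfactor : ∀ k : ℕ, (α + k * h) / (β + k * h) ≤ Real.exp (-(β - α) * (β + k * h)⁻¹) :=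
    fun k => by
      have := Real.add_one_le_exp (-(β - α) * (β + k * h)⁻¹)
      convert this using 1
      field_simp [(hpos k).ne']
      ring
  have hexp :
      Tendsto (fun N => Real.exp (-(β - α) * ∑ k ∈ range N, (β + k * h)⁻¹)) atTop (𝓝 0) :=
    Real.tendsto_exp_atBot.comp <|
      (tendsto_sum_range_inv_add_mul_atTop (hα.trans_lt hαβ) hh).const_mul_atTop_of_neg
        (by linarith)
  refine squeeze_zero (fun N => ?_) (fun N => ?_) hexp
  · exact div_nonneg (prod_nonneg fun k _ => hnum k) (prod_nonneg fun k _ => (hpos k).le)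
  · rw [← prod_div_distrib, mul_sum, Real.exp_sum]
    exact prod_le_prod (fun k _ => div_nonneg (hnum k) (hpos k).le) fun k _ => hfactor k

/-- The convergent `h`-factorial expansion
`1/(x-α) = Σ_{s≥1} α^{[s-1]_h} x^{-[s]_h}` for `Re x > α > 0`. -/
theorem factorial_series_of_inv_sub
    (h : ℝ) (hh : 0 < h) (α : ℝ) (hα : 0 < α) (x : ℂ) (hx : α < x.re) :
    HasSum
      (fun s : ℕ =>
        (∏ k ∈ Finset.range s, ((α : ℂ) + (k : ℂ) * (h : ℂ))) *
          (∏ k ∈ Finset.range (s + 1), (x + (k : ℂ) * (h : ℂ)))⁻¹)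
      ((x - (α : ℂ))⁻¹) := by
  have hpos : ∀ k : ℕ, 0 < x.re + k * h := fun k =>
    add_pos_of_pos_of_nonneg (hα.trans hx) (by positivity)
  have hnum : ∀ k : ℕ, ‖(α : ℂ) + (k : ℂ) * (h : ℂ)‖ ≤ α + k * h := fun k => by
    rw [← Complex.ofReal_natCast, ← Complex.ofReal_mul, ← Complex.ofReal_add, Complex.norm_real,
      Real.norm_of_nonneg (by positivity)]
  have hden : ∀ k : ℕ, x.re + k * h ≤ ‖x + (k : ℂ) * (h : ℂ)‖ := fun k => by
    simpa using Complex.re_le_norm (x + (k : ℂ) * (h : ℂ))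
  have hden₀ : ∀ k : ℕ, x + (k : ℂ) * (h : ℂ) ≠ 0 := fun k =>
    norm_pos_iff.1 ((hpos k).trans_le (hden k))
  have hratio := tendsto_prod_add_mul_div_prod_add_mul hα.le hx hh.le
  have hmajorant : HasSum (fun s : ℕ => (∏ k ∈ range s, (α + k * h)) *
      (∏ k ∈ range (s + 1), (x.re + k * h))⁻¹) (x.re - α)⁻¹ :=
    (hasSum_iff_tendsto_nat_of_nonneg (fun s => mul_nonneg (prod_nonneg fun k _ => by positivity)
      (inv_nonneg.2 (prod_nonneg fun k _ => (hpos k).le))) _).2 <|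
      tendsto_sum_range_prod_mul_inv_prod_succ (fun k => (hpos k).ne') (fun k => by ring)
        (sub_ne_zero.2 hx.ne') hratio
  refine (hasSum_iff_tendsto_nat_of_summable_norm <| hmajorant.summable.of_nonneg_of_le
    (fun s => norm_nonneg _) fun s => norm_prod_mul_inv_prod_le _ _ hnum hpos hden).2 ?_
  refine tendsto_sum_range_prod_mul_inv_prod_succ hden₀ (fun k => by ring)
    (sub_ne_zero.2 fun hxα => hx.ne' (by simp [hxα])) (squeeze_zero_norm (fun N => ?_) hratio)
  simpa only [div_eq_mul_inv] using norm_prod_mul_inv_prod_le _ _ hnum hpos hden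
end

section
/- Comparing the factorial-series expansion 1/(x-α) = Σ_{s≥1} α^{[s-1]_h} x^{-[s]_h} with the geometric expansion 1/(x-α) = Σ_{k≥0} α^k x^{-(k+1)} and the expansions 1/x^k = Σ_s ψ_{k,s}^{(h)} x^{-[s]_h} yields, for every s ≥ 1: Σ_{k≥1} ψ_{k,s}^{(h)} · α^{k-1} = α^{[s-1]_h} = α(α+h)···(α+(s-2)h). -/
/-!
A factorial series `∑ₜ cₜ / (x (x + h) ⋯ (x + (t - 1) h))` that vanishes for all large real
`x` has all its coefficients zero: by dominated convergence its value tends to `c₀` as `x → ∞`,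
and after dividing by `x - h` the remaining coefficients form such a series again. So the
coefficients `ψ (n + 1) (s + 1)` are forced, and they are the coefficients of `Xⁿ` in
`X (X + h) ⋯ (X + (s - 1) h)`: with these coefficients the partial sums of the series for
`1 / x ^ (n + 1)` telescope, their error being the part of degree `≤ n` of the rising factorial
at `x` divided by the whole of it. Summing over `k` against `αᵏ` then merely evaluates this
polynomial at `α`.
-/

open Finset Filter Topology Polynomial

namespace Polynomial

variable {R : Type*} [CommRing R]

theorem coeff_mul_X_add_C (p : R[X]) (c : R) (m : ℕ) :
    (p * (X + C c)).coeff (m + 1) = p.coeff m + p.coeff (m + 1) * c := by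
  rw [mul_add, coeff_add, coeff_mul_X, coeff_mul_C]

theorem sum_range_coeff_mul_X_add_C (p : R[X]) (c x : R) (n : ℕ) :
    ∑ m ∈ range (n + 1), (p * (X + C c)).coeff m * x ^ m
      = (x + c) * ∑ m ∈ range (n + 1), p.coeff m * x ^ m - p.coeff n * x ^ (n + 1) := by
  induction n with
  | zero => simp; ring
  | succ n ih =>
    rw [sum_range_succ, ih, sum_range_succ _ (n + 1), coeff_mul_X_add_C]
    ring

theorem hasSum_coeff_mul_pow [TopologicalSpace R] [IsTopologicalAddGroup R] (p : R[X]) (x : R) :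
    HasSum (fun m => p.coeff m * x ^ m) (p.eval x) := by
  rw [eval_eq_sum_range' (Nat.lt_succ_self _)]
  exact hasSum_sum_of_ne_finset_zero fun m hm => by
    rw [coeff_eq_zero_of_natDegree_lt (by simpa using hm), zero_mul]

theorem coeff_mul_pow_le_eval {p : ℝ[X]} (hp : ∀ m, 0 ≤ p.coeff m) {x : ℝ} (hx : 0 ≤ x)
    (m : ℕ) : p.coeff m * x ^ m ≤ p.eval x :=
  le_hasSum (p.hasSum_coeff_mul_pow x) m fun j _ => by have := hp j; positivity

end Polynomial

/-- The rising `h`-factorial `X^{[s]_h}`. -/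
noncomputable def hPochhammer (h : ℝ) (s : ℕ) : ℝ[X] := ∏ k ∈ range s, (X + C (k * h))

namespace hPochhammer

variable (h : ℝ)

theorem succ_right (s : ℕ) : hPochhammer h (s + 1) = hPochhammer h s * (X + C (s * h)) :=
  prod_range_succ _ _

theorem eval_eq (x : ℝ) (s : ℕ) : (hPochhammer h s).eval x = ∏ k ∈ range s, (x + k * h) := by
  simp [hPochhammer, eval_prod]

theorem ofReal_eval (x : ℝ) (s : ℕ) :
    (((hPochhammer h s).eval x : ℝ) : ℂ) = ∏ k ∈ range s, ((x : ℂ) + k * h) := by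
  simp [eval_eq]

theorem eval_succ_right (x : ℝ) (s : ℕ) :
    (hPochhammer h (s + 1)).eval x = (hPochhammer h s).eval x * (x + s * h) := by
  simp [succ_right]

theorem eval_succ_left (x : ℝ) (s : ℕ) :
    (hPochhammer h (s + 1)).eval x = x * (hPochhammer h s).eval (x + h) := by
  simp only [eval_eq, prod_range_succ']
  rw [mul_comm]
  congr 1
  · simp
  · exact prod_congr rfl fun k _ => by push_cast; ring

variable {h}

theorem coeff_nonneg (hh : 0 ≤ h) (s m : ℕ) : 0 ≤ (hPochhammer h s).coeff m := by
  induction s generalizing m with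
  | zero => rw [hPochhammer, prod_range_zero, coeff_one]; positivity
  | succ s ih =>
    rcases m with _ | m
    · rw [succ_right, mul_add, coeff_add, coeff_mul_X_zero, coeff_mul_C]
      have := ih 0
      positivity
    · rw [succ_right, coeff_mul_X_add_C]
      have := ih m
      have := ih (m + 1)
      positivity

theorem eval_pos (hh : 0 ≤ h) {x : ℝ} (hx : 0 < x) (s : ℕ) : 0 < (hPochhammer h s).eval x := by
  rw [eval_eq]
  exact prod_pos fun k _ => by positivity

theorem eval_mono (hh : 0 ≤ h) {x y : ℝ} (hx : 0 ≤ x) (hxy : x ≤ y) (s : ℕ) :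
    (hPochhammer h s).eval x ≤ (hPochhammer h s).eval y := by
  simp only [eval_eq]
  exact prod_le_prod (fun k _ => by positivity) fun k _ => by linarith

theorem tendsto_eval_atTop (hh : 0 ≤ h) (s : ℕ) :
    Tendsto (fun x => (hPochhammer h (s + 1)).eval x) atTop atTop := by
  refine tendsto_atTop_mono' atTop ?_ (tendsto_id.atTop_mul_const (eval_pos hh one_pos s))
  filter_upwards [eventually_ge_atTop 1] with x hx
  rw [eval_succ_left]
  exact mul_le_mul_of_nonneg_left (eval_mono hh zero_le_one (by linarith) s)
    (zero_le_one.trans hx)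

theorem tendsto_eval_div_eval_add (hh : 0 < h) {x : ℝ} (hx : 0 < x) :
    Tendsto (fun j => (hPochhammer h j).eval x / (hPochhammer h j).eval (x + h))
      atTop (𝓝 0) := by
  rw [← tendsto_add_atTop_iff_nat 1]
  have hlim : Tendsto (fun j : ℕ => x / (x + h + j * h)) atTop (𝓝 0) :=
    tendsto_const_nhds.div_atTop
      (tendsto_atTop_add_const_left _ _ (tendsto_natCast_atTop_atTop.atTop_mul_const hh))
  refine hlim.congr fun j => ?_
  have hP := eval_pos hh.le (x := x + h) (by positivity) j
  rw [eval_succ_left, eval_succ_right]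
  field_simp

theorem eval_div_eval_add_two_mul (hh : 0 ≤ h) {x : ℝ} (hx : 0 < x) (t : ℕ) :
    (hPochhammer h t).eval x / (hPochhammer h t).eval (x + 2 * h)
      = x * (x + h) / ((x + t * h) * (x + (t + 1) * h)) := by
  have hP := eval_pos hh (x := x + 2 * h) (by positivity) t
  have hxt : 0 < x + t * h := by positivity
  have hxt' : 0 < x + (t + 1) * h := by positivity
  have key := (eval_succ_right h x (t + 1)).symm.trans (eval_succ_left h x (t + 1))
  rw [eval_succ_right, eval_succ_left, add_assoc, ← two_mul] at key
  push_cast at key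
  field_simp
  linear_combination key

theorem summable_eval_div_eval_add_two_mul (hh : 0 < h) {x : ℝ} (hx : h ≤ x) :
    Summable fun t => (hPochhammer h t).eval x / (hPochhammer h t).eval (x + 2 * h) := by
  have hx0 : 0 < x := hh.trans_le hx
  have hsum : Summable fun t : ℕ => x * (x + h) / h ^ 2 * (1 / ((t : ℝ) + 1) ^ 2) := by
    refine Summable.mul_left _ ?_
    exact_mod_cast (summable_nat_add_iff 1).2 (Real.summable_one_div_nat_pow.2 one_lt_two)
  refine hsum.of_nonneg_of_le (fun t => (div_pos (eval_pos hh.le hx0 t)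
    (eval_pos hh.le (by positivity) t)).le) fun t => ?_
  rw [eval_div_eval_add_two_mul hh.le hx0, mul_one_div, div_div]
  refine div_le_div_of_nonneg_left (by positivity) (by positivity) ?_
  calc h ^ 2 * ((t : ℝ) + 1) ^ 2 = ((t + 1) * h) * ((t + 1) * h) := by ring
    _ ≤ (x + t * h) * (x + (t + 1) * h) := by gcongr <;> nlinarith

end hPochhammer

/-- The coefficient of `1 / x^{[s]_h}` in the factorial series of `1 / x ^ (n + 1)`. -/
noncomputable def invPowCoeff (h : ℝ) (n : ℕ) : ℕ → ℝ
  | 0 => 0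
  | s + 1 => (hPochhammer h s).coeff n

section Expansion

variable {h x : ℝ}

theorem invPowCoeff_nonneg (hh : 0 ≤ h) (n s : ℕ) : 0 ≤ invPowCoeff h n s := by
  cases s
  · exact le_rfl
  · exact hPochhammer.coeff_nonneg hh _ _

theorem sum_range_invPowCoeff_div (hh : 0 ≤ h) (hx : 0 < x) (n j : ℕ) :
    ∑ s ∈ range (j + 1), invPowCoeff h n s / (hPochhammer h s).eval x
      = (1 - (∑ m ∈ range (n + 1), (hPochhammer h j).coeff m * x ^ m)
          / (hPochhammer h j).eval x) / x ^ (n + 1) := by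
  induction j with
  | zero => simp [invPowCoeff, hPochhammer, coeff_one]
  | succ j ih =>
    have hP := hPochhammer.eval_pos hh hx j
    have hxj : 0 < x + j * h := by positivity
    rw [sum_range_succ, ih, invPowCoeff, hPochhammer.succ_right, sum_range_coeff_mul_X_add_C,
      ← hPochhammer.succ_right, hPochhammer.eval_succ_right]
    field_simp
    ring

theorem tendsto_sum_range_coeff_mul_pow_div_eval (hh : 0 < h) (hx : h < x) (n : ℕ) :
    Tendsto (fun j => (∑ m ∈ range n, (hPochhammer h j).coeff m * x ^ m)
      / (hPochhammer h j).eval x) atTop (𝓝 0) := by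
  have hx0 : 0 < x := hh.trans hx
  set y := x - h
  have hy : 0 < y := sub_pos.2 hx
  set K := ∑ m ∈ range n, (x / y) ^ m
  -- Each coefficient is controlled by the value at `y`, and the rising factorial at `y = x - h`
  -- is negligible against the one at `x`.
  have hbound : ∀ j, ∑ m ∈ range n, (hPochhammer h j).coeff m * x ^ m
      ≤ K * (hPochhammer h j).eval y := by
    intro j
    rw [sum_mul]
    refine sum_le_sum fun m _ => ?_
    calc (hPochhammer h j).coeff m * x ^ m
        = (hPochhammer h j).coeff m * y ^ m * (x / y) ^ m := by rw [div_pow]; field_simp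
      _ ≤ (hPochhammer h j).eval y * (x / y) ^ m :=
          mul_le_mul_of_nonneg_right
            (coeff_mul_pow_le_eval (hPochhammer.coeff_nonneg hh.le j) hy.le m) (by positivity)
      _ = (x / y) ^ m * (hPochhammer h j).eval y := mul_comm _ _
  have hlim := (hPochhammer.tendsto_eval_div_eval_add hh hy).const_mul K
  rw [mul_zero, sub_add_cancel] at hlim
  refine squeeze_zero (fun j => ?_) (fun j => ?_) hlim
  · refine div_nonneg (sum_nonneg fun m _ => ?_) (hPochhammer.eval_pos hh.le hx0 j).le
    have := hPochhammer.coeff_nonneg hh.le j m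
    positivity
  · rw [mul_div_assoc']
    exact div_le_div_of_nonneg_right (hbound j) (hPochhammer.eval_pos hh.le hx0 j).le

theorem hasSum_invPowCoeff_div (hh : 0 < h) (hx : h < x) (n : ℕ) :
    HasSum (fun s => invPowCoeff h n s / (hPochhammer h s).eval x) (x ^ (n + 1))⁻¹ := by
  have hx0 : 0 < x := hh.trans hx
  rw [hasSum_iff_tendsto_nat_of_nonneg fun s =>
    div_nonneg (invPowCoeff_nonneg hh.le n s) (hPochhammer.eval_pos hh.le hx0 s).le,
    ← tendsto_add_atTop_iff_nat 1]
  simp only [sum_range_invPowCoeff_div hh.le hx0]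
  simpa using ((tendsto_sum_range_coeff_mul_pow_div_eval hh hx (n + 1)).const_sub 1).div_const
    (x ^ (n + 1))

end Expansion

namespace FactorialSeries

variable {h : ℝ} {c : ℕ → ℂ} {R : ℝ}

theorem coeff_zero_eq_zero_of_hasSum_zero_s9 (hh : 0 < h)
    (hc : ∀ x : ℝ, R < x → HasSum (fun t => c t * (((hPochhammer h t).eval x : ℝ) : ℂ)⁻¹) 0) :
    c 0 = 0 := by
  set x₀ := max R h + 1
  have hx₀R : R < x₀ := by linarith [le_max_left R h]
  have hx₀h : h ≤ x₀ := by linarith [le_max_right R h]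
  have hx₀ : 0 < x₀ := by linarith
  have hP₀ := hPochhammer.eval_pos hh.le hx₀
  obtain ⟨A, hA⟩ := ((hc x₀ hx₀R).summable.tendsto_atTop_zero.norm).bddAbove_range
  have hcA : ∀ t, ‖c t‖ ≤ A * (hPochhammer h t).eval x₀ := fun t => by
    have := hA (Set.mem_range_self t)
    rw [norm_mul, norm_inv, Complex.norm_real, Real.norm_of_nonneg (hP₀ t).le] at this
    rwa [← div_le_iff₀ (hP₀ t)]
  have hlim := tendsto_tsum_of_dominated_convergence (𝓕 := atTop)
    (f := fun (x : ℝ) t => c t * (((hPochhammer h t).eval x : ℝ) : ℂ)⁻¹)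
    (g := fun t => if t = 0 then c 0 else 0)
    ((hPochhammer.summable_eval_div_eval_add_two_mul hh hx₀h).mul_left A) ?_ ?_
  · rw [tsum_ite_eq] at hlim
    refine tendsto_nhds_unique hlim (tendsto_const_nhds.congr' ?_)
    filter_upwards [eventually_gt_atTop R] with x hx
    exact (hc x hx).tsum_eq.symm
  · rintro (_ | t)
    · simp [hPochhammer]
    · simpa using ((Complex.continuous_ofReal.tendsto 0).comp (tendsto_inv_atTop_zero.comp
        (hPochhammer.tendsto_eval_atTop hh.le t))).const_mul (c (t + 1))
  · filter_upwards [eventually_ge_atTop (x₀ + 2 * h)] with x hx t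
    have hP := hPochhammer.eval_pos hh.le (x := x₀ + 2 * h) (by positivity) t
    have hmono := hPochhammer.eval_mono hh.le (by positivity) hx t
    rw [norm_mul, norm_inv, Complex.norm_real, Real.norm_of_nonneg (hP.trans_le hmono).le,
      ← div_eq_mul_inv, mul_div_assoc']
    exact div_le_div₀ ((norm_nonneg _).trans (hcA t)) (hcA t) hP hmono

theorem hasSum_tail_zero {x : ℝ} (hx : 0 < x) (hc₀ : c 0 = 0)
    (hc : HasSum (fun t => c t * (((hPochhammer h t).eval x : ℝ) : ℂ)⁻¹) 0) :
    HasSum (fun t => c (t + 1) * (((hPochhammer h t).eval (x + h) : ℝ) : ℂ)⁻¹) 0 := by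
  have htail := (hasSum_nat_add_iff' 1).2 hc
  simp only [sum_range_one, hc₀, zero_mul, sub_zero, hPochhammer.eval_succ_left] at htail
  have hx' : (x : ℂ) ≠ 0 := Complex.ofReal_ne_zero.2 hx.ne'
  simpa [mul_inv, ← mul_assoc, mul_comm _ (x : ℂ)⁻¹, hx'] using htail.mul_left (x : ℂ)

theorem eq_zero_of_hasSum_zero (hh : 0 < h)
    (hc : ∀ x : ℝ, R < x → HasSum (fun t => c t * (((hPochhammer h t).eval x : ℝ) : ℂ)⁻¹) 0) :
    c = 0 := by
  funext t
  induction t generalizing c R with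
  | zero => exact coeff_zero_eq_zero_of_hasSum_zero_s9 hh hc
  | succ t ih =>
    refine ih (c := fun t => c (t + 1)) (R := max R 0 + h) fun x hx => ?_
    have hxR : R < x - h := by linarith [le_max_left R 0]
    have hx0 : 0 < x - h := by linarith [le_max_right R 0]
    simpa using hasSum_tail_zero hx0 (coeff_zero_eq_zero_of_hasSum_zero_s9 hh hc) (hc _ hxR)

end FactorialSeries

theorem factorial_series_coeffs_sum_general
    (h : ℝ) (hh : 0 < h) (ψ : ℕ → ℕ → ℂ) (R : ℝ)
    (hexp : ∀ n : ℕ, ∀ x : ℂ, R < x.re →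
      HasSum (fun s : ℕ => ψ n s * (∏ k ∈ Finset.range s, (x + (k : ℂ) * (h : ℂ)))⁻¹)
        ((x ^ n)⁻¹))
    (α : ℝ) (s : ℕ) (hs : 1 ≤ s) :
    HasSum (fun k : ℕ => ψ (k + 1) s * (α : ℂ) ^ k)
      (∏ j ∈ Finset.range (s - 1), ((α : ℂ) + (j : ℂ) * (h : ℂ))) := by
  have hψ : ∀ n, ψ (n + 1) = fun t => (invPowCoeff h n t : ℂ) := fun n => by
    rw [← sub_eq_zero]
    refine FactorialSeries.eq_zero_of_hasSum_zero hh (R := max R h) fun x hx => ?_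
    have hxR : R < x := (le_max_left R h).trans_lt hx
    have hxh : h < x := (le_max_right R h).trans_lt hx
    have := (hexp (n + 1) x hxR).sub
      (Complex.hasSum_ofReal.2 (hasSum_invPowCoeff_div hh hxh n))
    simpa [sub_mul, div_eq_mul_inv, hPochhammer.ofReal_eval] using this
  obtain ⟨s, rfl⟩ := Nat.exists_eq_add_of_le' hs
  simpa [hψ, invPowCoeff, ← hPochhammer.ofReal_eval] using
    Complex.hasSum_ofReal.2 ((hPochhammer h s).hasSum_coeff_mul_pow α)

/-- Identification of the factorial and geometric expansions of `1/(x-α)`: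
`Σ_{k≥1} ψ_{k,s} α^{k-1} = α^{[s-1]_h}`. -/
theorem factorial_series_coeffs_sum
    (h : ℝ) (hh : 0 < h) (ψ : ℕ → ℕ → ℂ) (R : ℝ)
    (hexp : ∀ n : ℕ, ∀ x : ℂ, R < x.re →
      HasSum (fun s : ℕ => ψ n s * (∏ k ∈ Finset.range s, (x + (k : ℂ) * (h : ℂ)))⁻¹)
        ((x ^ n)⁻¹))
    (α : ℝ) (hα : 0 < α) (s : ℕ) (hs : 1 ≤ s) :
    HasSum (fun k : ℕ => ψ (k + 1) s * (α : ℂ) ^ k)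
      (∏ j ∈ Finset.range (s - 1), ((α : ℂ) + (j : ℂ) * (h : ℂ))) :=
  factorial_series_coeffs_sum_general h hh ψ R hexp α s hs
end

section
/- For λ ≥ 0 and real r > λ + 1, the series Σ_{s≥1} Π_{k=0}^{s-2} (λ+k)/(r+k) converges. (This follows since by Stirling's formula the general term is asymptotic to a constant times s^{λ - r}, and r - λ > 1.) -/
/-- For `λ ≥ 0` and `r > λ + 1`, the series `Σ_s Π_{k<s} (λ+k)/(r+k)` converges. -/
theorem summable_ratio_products (lam r : ℝ) (hlam : 0 ≤ lam) (hr : lam + 1 < r) :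
    Summable (fun s : ℕ => ∏ k ∈ Finset.range s, (lam + (k : ℝ)) / (r + (k : ℝ))) := by
  set f : ℕ → ℝ := fun s => ∏ k ∈ Finset.range s, (lam + (k : ℝ)) / (r + (k : ℝ)) with hf
  have hr0 : (0:ℝ) < r := by linarith
  have hfnonneg : ∀ s, 0 ≤ f s := by
    intro s
    apply Finset.prod_nonneg
    intro k _
    have hk : (0:ℝ) ≤ (k:ℝ) := Nat.cast_nonneg k
    exact div_nonneg (by linarith) (by linarith)
  set T : ℕ → ℝ := fun s => ((s:ℝ) + r - 1) * f s with hT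
  have hTnonneg : ∀ s, 0 ≤ T s := by
    intro s
    have hk : (0:ℝ) ≤ (s:ℝ) := Nat.cast_nonneg s
    exact mul_nonneg (by linarith) (hfnonneg s)
  have key : ∀ s, (r - lam - 1) * f s = T s - T (s + 1) := by
    intro s
    have hk : (0:ℝ) ≤ (s:ℝ) := Nat.cast_nonneg s
    have hrs : r + (s:ℝ) ≠ 0 := by linarith
    have hsucc : f (s + 1) = f s * ((lam + s) / (r + s)) :=
      Finset.prod_range_succ _ s
    simp only [hT, hsucc, Nat.cast_add, Nat.cast_one]
    field_simp
    ring
  have hd : (0:ℝ) < r - lam - 1 := by linarith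
  apply summable_of_sum_range_le (c := T 0 / (r - lam - 1)) hfnonneg
  intro n
  have hsum : ∑ s ∈ Finset.range n, (r - lam - 1) * f s = T 0 - T n := by
    have := Finset.sum_range_sub' T n
    calc ∑ s ∈ Finset.range n, (r - lam - 1) * f s
        = ∑ s ∈ Finset.range n, (T s - T (s + 1)) := by
          exact Finset.sum_congr rfl (fun s _ => key s)
      _ = T 0 - T n := this
  have h1 : (r - lam - 1) * ∑ s ∈ Finset.range n, f s = T 0 - T n := by
    rw [Finset.mul_sum]; exact hsum
  rw [le_div_iff₀ hd]
  have hTn := hTnonneg n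
  nlinarith [h1]
end

section
/- Suppose Y_s^{(h)} → Ỹ_s as h → 0⁺ for each s, and the family Y^{(h)}(x) = Σ_s Y_s^{(h)} x^{-[s]_h} is of type (C,λ) (i.e. ‖Y_s^{(h)}‖ ≤ Cλ^{[s-1]_h} for s ≥ 1, uniformly in small h). Then the power series Ỹ(x) = Σ_s Ỹ_s x^{-s} converges absolutely for |x| > λ+1, and for every x with Re(x) > λ+1 one has Y^{(h)}(x) → Ỹ(x) as h → 0⁺. -/
/-!
Passing to the limit in the type-`(C,λ)` bound gives `‖Ỹ_{s+1}‖ ≤ C λ^s`, so `Σ Ỹ_s x^{-s}` is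
dominated by a geometric series for `|x| > λ`. For `r = Re x > λ + 1` and `0 < h ≤ 1` the `s+1`-st
term of the factorial series has norm at most `(C / r) λ^{[s]_1} / r^{[s]_1}`, uniformly in `h`, and
`∏_{k<n} (λ + k)/(r + k) ≤ (r / (r + n))^{r - λ}` is summable because `r - λ > 1`; dominated
convergence then gives the limit term by term.
-/

open Filter Topology Finset

/-- The paper's `a^{[n]_h}`. -/
def stepPochhammer {R : Type*} [CommSemiring R] (h a : R) (n : ℕ) : R :=
  ∏ k ∈ range n, (a + k * h)

section StepPochhammer

variable {R : Type*} [CommSemiring R]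

@[simp]
lemma stepPochhammer_zero_step (a : R) (n : ℕ) : stepPochhammer 0 a n = a ^ n := by
  simp [stepPochhammer]

lemma stepPochhammer_succ' (h a : R) (n : ℕ) :
    stepPochhammer h a (n + 1) = stepPochhammer h (a + h) n * a := by
  simp only [stepPochhammer, prod_range_succ', Nat.cast_add, Nat.cast_one, Nat.cast_zero,
    zero_mul, add_zero]
  congr 1
  exact prod_congr rfl fun k _ => by ring

lemma stepPochhammer_one_div (a b : ℝ) (n : ℕ) :
    stepPochhammer 1 a n / stepPochhammer 1 b n = ∏ k ∈ range n, (a + k) / (b + k) := by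
  simp [stepPochhammer, prod_div_distrib]

lemma tendsto_stepPochhammer [TopologicalSpace R] [IsTopologicalSemiring R] {α : Type*}
    {l : Filter α} {φ : α → R} (hφ : Tendsto φ l (𝓝 0)) (a : R) (n : ℕ) :
    Tendsto (fun t => stepPochhammer (φ t) a n) l (𝓝 (a ^ n)) := by
  have hcont : Continuous fun h : R => stepPochhammer h a n := by
    unfold stepPochhammer; fun_prop
  have hzero : Tendsto (fun h : R => stepPochhammer h a n) (𝓝 0) (𝓝 (a ^ n)) := by
    simpa using hcont.tendsto 0
  exact hzero.comp hφ

end StepPochhammer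

lemma log_add_sub_log_le_sum_inv {r : ℝ} (hr : 0 < r) (n : ℕ) :
    Real.log (r + n) - Real.log r ≤ ∑ k ∈ range n, (r + k)⁻¹ := by
  induction n with
  | zero => simp
  | succ n ih =>
    have hrn : 0 < r + n := by positivity
    have hstep : Real.log (r + (n + 1 : ℕ)) - Real.log (r + n) ≤ (r + n)⁻¹ := by
      have := Real.log_le_sub_one_of_pos (show 0 < (r + (n + 1 : ℕ)) / (r + n) by positivity)
      rw [Real.log_div (by positivity) hrn.ne'] at this
      convert this using 1
      push_cast; field_simp; ring
    rw [sum_range_succ]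
    linarith

lemma prod_div_le_rpow {lam r : ℝ} (hlam : 0 ≤ lam) (hlr : lam ≤ r) (hr : 0 < r) (n : ℕ) :
    ∏ k ∈ range n, (lam + k) / (r + k) ≤ (r / (r + n)) ^ (r - lam) := by
  have hfactor : ∀ k : ℕ, (lam + k) / (r + k) ≤ Real.exp (-((r - lam) * (r + k)⁻¹)) := by
    intro k
    have hid : (lam + k) / (r + k) = -((r - lam) * (r + k)⁻¹) + 1 := by
      field_simp; ring
    rw [hid]
    exact Real.add_one_le_exp _
  calc ∏ k ∈ range n, (lam + k) / (r + k)
      ≤ ∏ k ∈ range n, Real.exp (-((r - lam) * (r + k)⁻¹)) :=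
        prod_le_prod (fun k _ => by positivity) fun k _ => hfactor k
    _ = Real.exp (-((r - lam) * ∑ k ∈ range n, (r + k)⁻¹)) := by
        rw [← Real.exp_sum, mul_sum, ← sum_neg_distrib]
    _ ≤ Real.exp ((r - lam) * (Real.log r - Real.log (r + n))) := by
        gcongr
        nlinarith [log_add_sub_log_le_sum_inv hr n]
    _ = (r / (r + n)) ^ (r - lam) := by
        rw [Real.rpow_def_of_pos (by positivity), Real.log_div hr.ne' (by positivity)]
        ring_nf

lemma summable_stepPochhammer_one_div {lam r : ℝ} (hlam : 0 ≤ lam) (hr : lam + 1 < r) :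
    Summable fun n : ℕ => stepPochhammer 1 lam n / stepPochhammer 1 r n := by
  have hr0 : 0 < r := by linarith
  have hpseries : Summable fun n : ℕ => r ^ (r - lam) * (((n + 1 : ℕ) : ℝ) ^ (r - lam))⁻¹ :=
    ((summable_nat_add_iff 1).mpr
      (Real.summable_nat_rpow_inv.mpr (by linarith))).mul_left _
  simp only [stepPochhammer_one_div]
  refine hpseries.of_nonneg_of_le (fun n => prod_nonneg fun k _ => by positivity) fun n => ?_
  calc ∏ k ∈ range n, (lam + k) / (r + k)
      ≤ (r / (r + n)) ^ (r - lam) := prod_div_le_rpow hlam (by linarith) hr0 n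
    _ ≤ (r * ((n + 1 : ℕ) : ℝ)⁻¹) ^ (r - lam) := by
        rw [div_eq_mul_inv]
        gcongr
        · linarith
        · push_cast; linarith
    _ = r ^ (r - lam) * (((n + 1 : ℕ) : ℝ) ^ (r - lam))⁻¹ := by
        rw [Real.mul_rpow hr0.le (by positivity), Real.inv_rpow (by positivity)]

section Order
variable {R : Type*} [CommSemiring R] [PartialOrder R] [IsStrictOrderedRing R]

lemma stepPochhammer_nonneg {h a : R} (hh : 0 ≤ h) (ha : 0 ≤ a) (n : ℕ) :
    0 ≤ stepPochhammer h a n :=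
  prod_nonneg fun _ _ => by positivity

lemma stepPochhammer_pos {h a : R} (hh : 0 ≤ h) (ha : 0 < a) (n : ℕ) :
    0 < stepPochhammer h a n :=
  prod_pos fun _ _ => by positivity

end Order

lemma stepPochhammer_div_le_one_div {lam r h : ℝ} (hlam : 0 ≤ lam) (hr : lam + 1 ≤ r)
    (h0 : 0 ≤ h) (h1 : h ≤ 1) (m : ℕ) :
    stepPochhammer h lam m / stepPochhammer h (r + h) m ≤
      stepPochhammer 1 lam m / stepPochhammer 1 r m := by
  have hr0 : 0 < r := by linarith
  rw [stepPochhammer_one_div, stepPochhammer, stepPochhammer, ← prod_div_distrib]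
  refine prod_le_prod (fun k _ => by positivity) fun k _ => ?_
  rw [div_le_div_iff₀ (by positivity) (by positivity)]
  -- the two sides differ by `λ h + k (h (λ + 1 - r) + r - λ)`, and `h ≤ 1` makes the bracket `≥ 1`
  have hbracket : 1 ≤ h * (lam + 1 - r) + (r - lam) := by nlinarith
  nlinarith [mul_nonneg k.cast_nonneg (show 0 ≤ h * (lam + 1 - r) + (r - lam) by linarith),
    mul_nonneg hlam h0]

lemma re_stepPochhammer_le_norm {x : ℂ} (hx : 0 ≤ x.re) {h : ℝ} (hh : 0 ≤ h) (n : ℕ) :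
    stepPochhammer h x.re n ≤ ‖stepPochhammer (h : ℂ) x n‖ := by
  rw [stepPochhammer, stepPochhammer, norm_prod]
  refine prod_le_prod (fun k _ => by positivity) fun k _ => ?_
  simpa using Complex.re_le_norm (x + k * h)

lemma norm_inv_stepPochhammer_smul_le {E : Type*} [SeminormedAddCommGroup E] [NormedSpace ℂ E]
    {C lam h : ℝ} {x : ℂ} {y : E} {m : ℕ} (hC : 0 ≤ C) (hlam : 0 ≤ lam) (hx : lam + 1 < x.re)
    (h0 : 0 ≤ h) (h1 : h ≤ 1) (hy : ‖y‖ ≤ C * stepPochhammer h lam m) :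
    ‖(stepPochhammer (h : ℂ) x (m + 1))⁻¹ • y‖ ≤
      C / x.re * (stepPochhammer 1 lam m / stepPochhammer 1 x.re m) := by
  have hre : 0 < x.re := by linarith
  calc ‖(stepPochhammer (h : ℂ) x (m + 1))⁻¹ • y‖
      = ‖y‖ / ‖stepPochhammer (h : ℂ) x (m + 1)‖ := by rw [norm_smul, norm_inv, inv_mul_eq_div]
    _ ≤ C * stepPochhammer h lam m / stepPochhammer h x.re (m + 1) :=
        div_le_div₀ (mul_nonneg hC (stepPochhammer_nonneg h0 hlam m)) hy
          (stepPochhammer_pos h0 hre _) (re_stepPochhammer_le_norm hre.le h0 _)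
    _ = C / x.re * (stepPochhammer h lam m / stepPochhammer h (x.re + h) m) := by
        rw [stepPochhammer_succ']
        ring
    _ ≤ C / x.re * (stepPochhammer 1 lam m / stepPochhammer 1 x.re m) := by
        exact mul_le_mul_of_nonneg_left (stepPochhammer_div_le_one_div hlam hx.le h0 h1 m)
          (div_nonneg hC hre.le)

lemma norm_le_mul_pow_of_tendsto {E : Type*} [SeminormedAddCommGroup E] {Y : ℝ → E} {a : E}
    {C lam h₁ : ℝ} {s : ℕ} (hY : Tendsto Y (𝓝[>] 0) (𝓝 a)) (h₁pos : 0 < h₁)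
    (hbound : ∀ h, 0 < h → h < h₁ → ‖Y h‖ ≤ C * stepPochhammer h lam s) :
    ‖a‖ ≤ C * lam ^ s := by
  refine le_of_tendsto_of_tendsto hY.norm
    (((tendsto_stepPochhammer tendsto_id lam s).mono_left nhdsWithin_le_nhds).const_mul C) ?_
  filter_upwards [Ioo_mem_nhdsGT h₁pos] with h ⟨h0, h1⟩ using hbound h h0 h1

lemma summable_norm_mul_inv_pow {E : Type*} [SeminormedAddCommGroup E] {a : ℕ → E}
    {C lam ρ : ℝ} (hlam : 0 ≤ lam) (hρ : lam < ρ) (ha : ∀ s, ‖a (s + 1)‖ ≤ C * lam ^ s) :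
    Summable fun s => ‖a s‖ * ρ⁻¹ ^ s := by
  have hρ0 : 0 < ρ := hlam.trans_lt hρ
  have hratio : lam * ρ⁻¹ < 1 := by rwa [← div_eq_mul_inv, div_lt_one hρ0]
  rw [← summable_nat_add_iff 1]
  refine ((summable_geometric_of_lt_one (by positivity) hratio).mul_left (C * ρ⁻¹)).of_nonneg_of_le
    (fun s => by positivity) fun s => ?_
  calc ‖a (s + 1)‖ * ρ⁻¹ ^ (s + 1) ≤ C * lam ^ s * ρ⁻¹ ^ (s + 1) := by gcongr; exact ha s
    _ = C * ρ⁻¹ * (lam * ρ⁻¹) ^ s := by ring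

theorem factorial_series_confluence_general
    {E : Type*} [NormedRing E] [NormedAlgebra ℂ E] [CompleteSpace E]
    (C lam h₀ : ℝ) (hC : 0 ≤ C) (hlam : 0 ≤ lam)
    (Y : ℝ → ℕ → E) (Yt : ℕ → E)
    (hcoeff : ∀ s : ℕ, Tendsto (fun h : ℝ => Y h s)
      (nhdsWithin (0 : ℝ) (Set.Ioi 0)) (nhds (Yt s)))
    (htype : ∃ h₁ : ℝ, 0 < h₁ ∧ h₁ ≤ h₀ ∧ ∀ h : ℝ, 0 < h → h < h₁ → ∀ s : ℕ, 1 ≤ s →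
      ‖Y h s‖ ≤ C * ∏ k ∈ Finset.range (s - 1), (lam + (k : ℝ) * h)) :
    (∀ x : ℂ, lam + 1 < ‖x‖ →
        Summable (fun s : ℕ => ‖Yt s‖ * ‖x‖⁻¹ ^ s)) ∧
      ∀ x : ℂ, lam + 1 < x.re →
        Tendsto
          (fun h : ℝ => ∑' s : ℕ, (∏ k ∈ Finset.range s, (x + (k : ℂ) * (h : ℂ)))⁻¹ • Y h s)
          (nhdsWithin (0 : ℝ) (Set.Ioi 0))
          (nhds (∑' s : ℕ, ((x : ℂ) ^ s)⁻¹ • Yt s)) := by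
  obtain ⟨h₁, h₁pos, -, hY⟩ := htype
  have hYt (s : ℕ) : ‖Yt (s + 1)‖ ≤ C * lam ^ s :=
    norm_le_mul_pow_of_tendsto (hcoeff (s + 1)) h₁pos fun h h0 h1 => hY h h0 h1 (s + 1) s.succ_pos
  refine ⟨fun x hx => summable_norm_mul_inv_pow hlam (by linarith) hYt, fun x hx => ?_⟩
  have hx0 : x ≠ 0 := fun h => by simp [h] at hx; linarith
  refine tendsto_tsum_of_dominated_convergence (bound := fun s => if s = 0 then ‖Yt 0‖ + 1
    else C / x.re * (stepPochhammer 1 lam (s - 1) / stepPochhammer 1 x.re (s - 1))) ?_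
    (fun s => ?_) ?_
  · rw [← summable_nat_add_iff 1]
    simpa using (summable_stepPochhammer_one_div hlam hx).mul_left (C / x.re)
  · have hofReal := (Complex.continuous_ofReal.tendsto' 0 0 Complex.ofReal_zero).mono_left
      (nhdsWithin_le_nhds (s := Set.Ioi 0))
    exact ((tendsto_stepPochhammer hofReal x s).inv₀ (pow_ne_zero s hx0)).smul (hcoeff s)
  · filter_upwards [(hcoeff 0).norm.eventually_lt_const (lt_add_one _),
      Ioo_mem_nhdsGT (lt_min h₁pos one_pos)] with h hY0 ⟨h0, hh⟩
    rintro (_ | m)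
    · simpa [stepPochhammer] using hY0.le
    · simp only [Nat.add_one_ne_zero, if_false, Nat.add_sub_cancel]
      exact norm_inv_stepPochhammer_smul_le hC hlam hx h0.le
          (hh.trans_le (min_le_right _ _)).le
          (hY h h0 (hh.trans_le (min_le_left _ _)) (m + 1) m.succ_pos)

/-- Confluence of type-`(C,λ)` `h`-factorial series to their limiting power series
at infinity: the limit series converges absolutely for `|x| > λ+1` and the
`h`-factorial sums converge pointwise for `Re x > λ+1` as `h → 0⁺`. -/
theorem factorial_series_confluence
    {E : Type*} [NormedRing E] [NormedAlgebra ℂ E] [CompleteSpace E]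
    (C lam h₀ : ℝ) (hC : 0 ≤ C) (hlam : 0 ≤ lam) (hh₀ : 0 < h₀)
    (Y : ℝ → ℕ → E) (Yt : ℕ → E)
    (hcoeff : ∀ s : ℕ, Tendsto (fun h : ℝ => Y h s)
      (nhdsWithin (0 : ℝ) (Set.Ioi 0)) (nhds (Yt s)))
    (htype : ∃ h₁ : ℝ, 0 < h₁ ∧ h₁ ≤ h₀ ∧ ∀ h : ℝ, 0 < h → h < h₁ → ∀ s : ℕ, 1 ≤ s →
      ‖Y h s‖ ≤ C * ∏ k ∈ Finset.range (s - 1), (lam + (k : ℝ) * h)) :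
    (∀ x : ℂ, lam + 1 < ‖x‖ →
        Summable (fun s : ℕ => ‖Yt s‖ * ‖x‖⁻¹ ^ s)) ∧
      ∀ x : ℂ, lam + 1 < x.re →
        Tendsto
          (fun h : ℝ => ∑' s : ℕ, (∏ k ∈ Finset.range s, (x + (k : ℂ) * (h : ℂ)))⁻¹ • Y h s)
          (nhdsWithin (0 : ℝ) (Set.Ioi 0))
          (nhds (∑' s : ℕ, ((x : ℂ) ^ s)⁻¹ • Yt s)) :=
  factorial_series_confluence_general C lam h₀ hC hlam Y Yt hcoeff htype
end
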